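/- arXiv:2307.07741 — 7 statements merged into one kernel-verified Lean document; each statement's English description precedes it below -/
import Mathlib

section
/- Let n ≥ 1 and let P_n ⊂ ℝ^n be the permutahedron, i.e. the convex hull of the points (σ(n)−1, σ(n−1)−1, …, σ(1)−1) over all permutations σ of {1,…,n}. For each choice of signs ε = (ε_{ij})_{1≤i<j≤n} ∈ {±1}^{n(n−1)/2}, set p_ε := ((n−1)/2, …, (n−1)/2) + Σ_{i<j} ε_{ij}·(1/2)(e_i − e_j). Then every p_ε is an integer point lying in P_n, and conversely every point of P_n ∩ ℤ^n equals p_ε for some choice of signs ε. -/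
open Finset

private def pairsF (n : ℕ) : Finset (Fin n × Fin n) :=
  Finset.univ.filter (fun p => p.1 < p.2)

private noncomputable def wins (n : ℕ) (ε : Fin n × Fin n → ℝ) (m : Fin n) :
    Finset (Fin n × Fin n) :=
  (pairsF n).filter (fun p => (p.1 = m ∧ ε p = 1) ∨ (p.2 = m ∧ ε p ≠ 1))

private noncomputable def outdeg (n : ℕ) (ε : Fin n × Fin n → ℝ) (m : Fin n) : ℕ :=
  (wins n ε m).card

private noncomputable def losses (n : ℕ) (ε : Fin n × Fin n → ℝ) (m : Fin n) :
    Finset (Fin n × Fin n) :=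
  (pairsF n).filter (fun p => (p.1 = m ∧ ε p ≠ 1) ∨ (p.2 = m ∧ ε p = 1))

private lemma mem_pairsF {n : ℕ} {p : Fin n × Fin n} : p ∈ pairsF n ↔ p.1 < p.2 := by
  simp [pairsF]

private lemma card_wins_add_losses (n : ℕ) (ε : Fin n × Fin n → ℝ) (m : Fin n) :
    (wins n ε m).card + (losses n ε m).card = n - 1 := by
  have hdisj : Disjoint (wins n ε m) (losses n ε m) := by
    rw [Finset.disjoint_left]
    rintro p hp hq
    simp only [wins, losses, mem_filter] at hp hq
    obtain ⟨hlt, hp⟩ := hp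
    have hlt' := mem_pairsF.mp hlt
    obtain ⟨-, hq⟩ := hq
    have hne : p.1 ≠ p.2 := ne_of_lt hlt'
    rcases hp with ⟨h1, h2⟩ | ⟨h1, h2⟩ <;> rcases hq with ⟨h3, h4⟩ | ⟨h3, h4⟩ <;>
      first
        | exact h4 h2
        | exact h2 h4
        | exact hne (h1.trans h3.symm)
        | exact hne (h3.trans h1.symm)
  rw [← Finset.card_union_of_disjoint hdisj]
  have hu : wins n ε m ∪ losses n ε m
      = (pairsF n).filter (fun p => p.1 = m ∨ p.2 = m) := by
    ext p
    simp only [wins, losses, mem_union, mem_filter]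
    constructor
    · rintro (⟨h, hp⟩ | ⟨h, hp⟩) <;> exact ⟨h, by tauto⟩
    · rintro ⟨hlt, h⟩
      by_cases hone : ε p = 1 <;> tauto
  rw [hu]
  have hcard := Finset.card_bij' (s := (pairsF n).filter (fun p => p.1 = m ∨ p.2 = m))
    (t := Finset.univ.erase m)
    (i := fun p _ => if p.1 = m then p.2 else p.1)
    (j := fun k _ => if k < m then (k, m) else (m, k))
    ?_ ?_ ?_ ?_
  · rw [hcard, Finset.card_erase_of_mem (mem_univ m), Finset.card_univ, Fintype.card_fin]
  · rintro p hp
    beta_reduce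
    rw [mem_filter, mem_pairsF] at hp
    obtain ⟨hlt, h | h⟩ := hp
    · rw [if_pos h]
      exact Finset.mem_erase.mpr ⟨(ne_of_lt (h ▸ hlt : m < p.2)).symm, mem_univ _⟩
    · have h1 : p.1 ≠ m := fun hh => absurd hlt (by rw [hh, h]; exact lt_irrefl m)
      rw [if_neg h1]
      exact Finset.mem_erase.mpr ⟨h1, mem_univ _⟩
  · rintro k hk
    beta_reduce
    replace hk : k ≠ m := (Finset.mem_erase.mp hk).1
    by_cases h : k < m
    · rw [if_pos h, mem_filter, mem_pairsF]
      exact ⟨h, Or.inr rfl⟩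
    · have h' : m < k := lt_of_le_of_ne (not_lt.mp h) (Ne.symm hk)
      rw [if_neg h, mem_filter, mem_pairsF]
      exact ⟨h', Or.inl rfl⟩
  · rintro p hp
    beta_reduce
    rw [mem_filter, mem_pairsF] at hp
    obtain ⟨hlt, h | h⟩ := hp
    · rw [if_pos h, if_neg (not_lt.mpr (le_of_lt (h ▸ hlt : m < p.2)))]
      rw [← h]
    · have h1 : p.1 ≠ m := fun hh => absurd hlt (by rw [hh, h]; exact lt_irrefl m)
      rw [if_neg h1, if_pos (h ▸ hlt : p.1 < m), ← h]
  · rintro k hk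
    beta_reduce
    replace hk : k ≠ m := (Finset.mem_erase.mp hk).1
    by_cases h : k < m
    · rw [if_pos h]
      simp only [if_neg (ne_of_lt h)]
    · have h' : m < k := lt_of_le_of_ne (not_lt.mp h) (Ne.symm hk)
      rw [if_neg h]
      simp

private lemma outdeg_le (n : ℕ) (ε : Fin n × Fin n → ℝ) (m : Fin n) :
    outdeg n ε m ≤ n - 1 := by
  have := card_wins_add_losses n ε m
  unfold outdeg
  omega

private lemma wins_def (n : ℕ) (ε : Fin n × Fin n → ℝ) (m : Fin n) :
    wins n ε m = (pairsF n).filter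
      (fun p => (p.1 = m ∧ ε p = 1) ∨ (p.2 = m ∧ ε p ≠ 1)) := rfl

private lemma losses_def (n : ℕ) (ε : Fin n × Fin n → ℝ) (m : Fin n) :
    losses n ε m = (pairsF n).filter
      (fun p => (p.1 = m ∧ ε p ≠ 1) ∨ (p.2 = m ∧ ε p = 1)) := rfl

private lemma outdeg_def (n : ℕ) (ε : Fin n × Fin n → ℝ) (m : Fin n) :
    outdeg n ε m = (wins n ε m).card := rfl

private lemma outdeg_def2 (n : ℕ) (ε : Fin n × Fin n → ℝ) (m : Fin n) :
    outdeg n ε m = ((pairsF n).filter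
      (fun p => (p.1 = m ∧ ε p = 1) ∨ (p.2 = m ∧ ε p ≠ 1))).card := rfl

private lemma pairsF_def (n : ℕ) :
    pairsF n = Finset.univ.filter (fun p : Fin n × Fin n => p.1 < p.2) := rfl

private lemma outdeg_sum (n : ℕ) (ε : Fin n × Fin n → ℝ) (m : Fin n) :
    (outdeg n ε m : ℤ) = ∑ p ∈ pairsF n,
      (if (p.1 = m ∧ ε p = 1) ∨ (p.2 = m ∧ ε p ≠ 1) then (1:ℤ) else 0) := by
  unfold outdeg wins
  rw [Finset.card_filter]
  push_cast [apply_ite (fun x : ℕ => (x : ℤ))]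
  rfl

private lemma pPt_eq (n : ℕ) (hn : 1 ≤ n) (ε : Fin n × Fin n → ℝ)
    (hε : ∀ p, ε p = 1 ∨ ε p = -1) :
    ((fun _ : Fin n => ((n : ℝ) - 1) / 2) +
        ∑ p ∈ Finset.univ.filter (fun p : Fin n × Fin n => p.1 < p.2),
          (ε p * (1 / 2)) • (Pi.single p.1 (1 : ℝ) - Pi.single p.2 (1 : ℝ)))
      = fun m => (outdeg n ε m : ℝ) := by
  have hpairs : Finset.univ.filter (fun p : Fin n × Fin n => p.1 < p.2) = pairsF n := by
    ext p; simp [mem_pairsF]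
  funext m
  simp only [Pi.add_apply, Finset.sum_apply, Pi.smul_apply, Pi.sub_apply, smul_eq_mul, hpairs]
  have key : ∀ p ∈ pairsF n,
      (ε p * (1/2)) * ((Pi.single p.1 (1:ℝ) : Fin n → ℝ) m - (Pi.single p.2 (1:ℝ) : Fin n → ℝ) m)
      = (if p ∈ wins n ε m then (1:ℝ)/2 else 0) - (if p ∈ losses n ε m then (1:ℝ)/2 else 0) := by
    intro p hp
    have hlt : p.1 < p.2 := mem_pairsF.mp hp
    have hne : p.1 ≠ p.2 := ne_of_lt hlt
    rw [wins_def, losses_def]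
    simp only [Finset.mem_filter]
    simp only [Pi.single_apply]
    rcases hε p with hs | hs <;> by_cases h1 : m = p.1 <;> by_cases h2 : m = p.2
    all_goals first
      | exact absurd (h1.symm.trans h2) hne
      | (simp [hs, hp, h1, h2, hne, Ne.symm hne, eq_comm]; try norm_num)
  rw [Finset.sum_congr rfl key, Finset.sum_sub_distrib]
  have hw : wins n ε m ⊆ pairsF n := by rw [wins_def]; exact Finset.filter_subset _ _
  have hl : losses n ε m ⊆ pairsF n := by rw [losses_def]; exact Finset.filter_subset _ _
  rw [Finset.sum_ite_mem, Finset.sum_ite_mem,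
    Finset.inter_eq_right.mpr hw, Finset.inter_eq_right.mpr hl,
    Finset.sum_const, Finset.sum_const]
  have hcast : ((wins n ε m).card : ℝ) + ((losses n ε m).card : ℝ) = (n : ℝ) - 1 := by
    have h := card_wins_add_losses n ε m
    have h2 : ((n:ℝ) - 1) = ((n - 1 : ℕ) : ℝ) := by
      rw [Nat.cast_sub hn, Nat.cast_one]
    rw [h2]
    exact_mod_cast h
  rw [outdeg_def]
  simp only [nsmul_eq_mul]
  linarith

private lemma outdeg_update (n : ℕ) (ε : Fin n × Fin n → ℝ) (q : Fin n × Fin n)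
    (hq : q ∈ pairsF n) (c : ℝ) (m : Fin n) :
    (outdeg n (Function.update ε q c) m : ℤ)
      = outdeg n ε m
        + (if (q.1 = m ∧ c = 1) ∨ (q.2 = m ∧ c ≠ 1) then 1 else 0)
        - (if (q.1 = m ∧ ε q = 1) ∨ (q.2 = m ∧ ε q ≠ 1) then 1 else 0) := by
  rw [outdeg_sum, outdeg_sum]
  have hfun : (fun p : Fin n × Fin n =>
      (if (p.1 = m ∧ Function.update ε q c p = 1) ∨ (p.2 = m ∧ Function.update ε q c p ≠ 1)
        then (1:ℤ) else 0))
    = Function.update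
        (fun p : Fin n × Fin n =>
          (if (p.1 = m ∧ ε p = 1) ∨ (p.2 = m ∧ ε p ≠ 1) then (1:ℤ) else 0))
        q (if (q.1 = m ∧ c = 1) ∨ (q.2 = m ∧ c ≠ 1) then (1:ℤ) else 0) := by
    funext p
    by_cases hp : p = q
    · subst hp
      rw [Function.update_self, Function.update_self]
    · rw [Function.update_of_ne hp, Function.update_of_ne hp]
  rw [hfun, Finset.sum_update_of_mem hq, Finset.sdiff_singleton_eq_erase,
    ← Finset.add_sum_erase _ _ hq]
  ring

private lemma flip_outdeg (n : ℕ) {i j : Fin n} (hij : i < j) (ε : Fin n × Fin n → ℝ)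
    (hε : ∀ p, ε p = 1 ∨ ε p = -1) :
    ∃ t : ℤ, (t = 1 ∨ t = -1) ∧
      (outdeg n (Function.update ε (i, j) (-ε (i, j))) i : ℤ) = outdeg n ε i + t ∧
      (outdeg n (Function.update ε (i, j) (-ε (i, j))) j : ℤ) = outdeg n ε j - t ∧
      ∀ m, m ≠ i → m ≠ j → outdeg n (Function.update ε (i, j) (-ε (i, j))) m = outdeg n ε m := by
  have hq : ((i, j) : Fin n × Fin n) ∈ pairsF n := mem_pairsF.mpr hij
  have hne : j ≠ i := (ne_of_lt hij).symm
  have hne' : i ≠ j := ne_of_lt hij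
  have hrest : ∀ m, m ≠ i → m ≠ j →
      outdeg n (Function.update ε (i, j) (-ε (i, j))) m = outdeg n ε m := by
    intro m hmi hmj
    have h := outdeg_update n ε (i, j) hq (-ε (i, j)) m
    rw [if_neg, if_neg] at h
    · exact_mod_cast by linarith [h]
    · rintro (⟨h1, -⟩ | ⟨h1, -⟩)
      · exact hmi h1.symm
      · exact hmj h1.symm
    · rintro (⟨h1, -⟩ | ⟨h1, -⟩)
      · exact hmi h1.symm
      · exact hmj h1.symm
  rcases hε (i, j) with hs | hs
  · refine ⟨-1, Or.inr rfl, ?_, ?_, hrest⟩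
    · have h := outdeg_update n ε (i, j) hq (-ε (i, j)) i
      rw [if_neg, if_pos] at h
      · linarith [h]
      · exact Or.inl ⟨rfl, hs⟩
      · rw [hs]
        rintro (⟨-, h2⟩ | ⟨h1, -⟩)
        · norm_num at h2
        · exact hne h1
    · have h := outdeg_update n ε (i, j) hq (-ε (i, j)) j
      rw [if_pos, if_neg] at h
      · linarith [h]
      · rw [hs]
        rintro (⟨h1, -⟩ | ⟨-, h2⟩)
        · exact hne' h1
        · exact h2 rfl
      · rw [hs]
        exact Or.inr ⟨rfl, by norm_num⟩
  · refine ⟨1, Or.inl rfl, ?_, ?_, hrest⟩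
    · have h := outdeg_update n ε (i, j) hq (-ε (i, j)) i
      rw [if_pos, if_neg] at h
      · linarith [h]
      · rw [hs]
        rintro (⟨-, h2⟩ | ⟨h1, -⟩)
        · norm_num at h2
        · exact hne h1
      · rw [hs]
        exact Or.inl ⟨rfl, by norm_num⟩
    · have h := outdeg_update n ε (i, j) hq (-ε (i, j)) j
      rw [if_neg, if_pos] at h
      · linarith [h]
      · rw [hs]
        exact Or.inr ⟨rfl, by norm_num⟩
      · rw [hs]
        rintro (⟨h1, -⟩ | ⟨-, h2⟩)
        · exact hne' h1
        · norm_num at h2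

private lemma hull_perm {n : ℕ} (τ : Equiv.Perm (Fin n)) {x : Fin n → ℝ}
    (hx : x ∈ convexHull ℝ {x : Fin n → ℝ | ∃ σ : Equiv.Perm (Fin n), x = fun m => ((σ m : ℕ) : ℝ)}) :
    (x ∘ τ) ∈ convexHull ℝ
      {x : Fin n → ℝ | ∃ σ : Equiv.Perm (Fin n), x = fun m => ((σ m : ℕ) : ℝ)} := by
  set V := {x : Fin n → ℝ | ∃ σ : Equiv.Perm (Fin n), x = fun m => ((σ m : ℕ) : ℝ)}
  have hmap : (LinearMap.funLeft ℝ ℝ τ) '' convexHull ℝ V = convexHull ℝ ((LinearMap.funLeft ℝ ℝ τ) '' V) :=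
    LinearMap.image_convexHull _ _
  have hVV : (LinearMap.funLeft ℝ ℝ τ) '' V ⊆ V := by
    rintro y ⟨v, ⟨σ, rfl⟩, rfl⟩
    exact ⟨τ.trans σ, rfl⟩
  have : (LinearMap.funLeft ℝ ℝ τ) x ∈ convexHull ℝ V := by
    have h1 : (LinearMap.funLeft ℝ ℝ τ) x ∈ convexHull ℝ ((LinearMap.funLeft ℝ ℝ τ) '' V) := by
      rw [← hmap]; exact Set.mem_image_of_mem _ hx
    exact convexHull_mono hVV h1
  exact this

private lemma score_mem_hull (n : ℕ) (hn : 1 ≤ n) (ε₀ : Fin n × Fin n → ℝ)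
    (hε₀ : ∀ p, ε₀ p = 1 ∨ ε₀ p = -1) :
    (fun m => (outdeg n ε₀ m : ℝ)) ∈ convexHull ℝ
      {x : Fin n → ℝ | ∃ σ : Equiv.Perm (Fin n), x = fun m => ((σ m : ℕ) : ℝ)} := by
  set V := {x : Fin n → ℝ | ∃ σ : Equiv.Perm (Fin n), x = fun m => ((σ m : ℕ) : ℝ)} with hV
  suffices H : ∀ k (ε : Fin n × Fin n → ℝ), (∀ p, ε p = 1 ∨ ε p = -1) →
      n ^ 3 ≤ (∑ m, (outdeg n ε m) ^ 2) + k →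
      (fun m => (outdeg n ε m : ℝ)) ∈ convexHull ℝ V by
    exact H (n ^ 3) ε₀ hε₀ (Nat.le_add_left _ _)
  intro k
  induction k with
  | zero =>
    intro ε hε hk
    exfalso
    have hb : ∑ m, (outdeg n ε m) ^ 2 ≤ n * (n - 1) ^ 2 := by
      calc ∑ m, (outdeg n ε m) ^ 2 ≤ ∑ _m : Fin n, (n - 1) ^ 2 :=
            Finset.sum_le_sum fun m _ => Nat.pow_le_pow_left (outdeg_le n ε m) 2
        _ = n * (n - 1) ^ 2 := by rw [Finset.sum_const, Finset.card_univ, Fintype.card_fin, smul_eq_mul]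
    have hlt : n * (n - 1) ^ 2 < n ^ 3 := by
      have h1 : (n - 1) ^ 2 < n ^ 2 := Nat.pow_lt_pow_left (by omega) (by norm_num)
      calc n * (n - 1) ^ 2 < n * n ^ 2 := Nat.mul_lt_mul_of_pos_left h1 (by omega)
        _ = n ^ 3 := by ring
    omega
  | succ k ih =>
    intro ε hε hk
    by_cases hinj : Function.Injective (outdeg n ε)
    · -- vertex case
      have hlt : ∀ m, outdeg n ε m < n := fun m => by have := outdeg_le n ε m; omega
      let g : Fin n → Fin n := fun m => ⟨outdeg n ε m, hlt m⟩
      have hginj : Function.Injective g := by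
        intro a b hab
        exact hinj (congrArg Fin.val hab)
      let σ : Equiv.Perm (Fin n) := Equiv.ofBijective g ((Finite.injective_iff_bijective).mp hginj)
      refine subset_convexHull ℝ V ⟨σ, ?_⟩
      funext m
      show ((outdeg n ε m : ℕ) : ℝ) = ((σ m : ℕ) : ℝ)
      have : (σ m : ℕ) = outdeg n ε m := rfl
      rw [this]
    · -- flip case
      rw [Function.not_injective_iff] at hinj
      obtain ⟨a, b, hab, hne⟩ := hinj
      obtain ⟨i, j, hij, hdij⟩ : ∃ i j : Fin n, i < j ∧ outdeg n ε i = outdeg n ε j := by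
        rcases lt_or_gt_of_ne hne with h | h
        · exact ⟨a, b, h, hab⟩
        · exact ⟨b, a, h, hab.symm⟩
      set ε' := Function.update ε (i, j) (-ε (i, j)) with hε'def
      have hε' : ∀ p, ε' p = 1 ∨ ε' p = -1 := by
        intro p
        by_cases hp : p = (i, j)
        · subst hp
          rw [hε'def, Function.update_self]
          rcases hε (i, j) with h | h <;> rw [h] <;> norm_num
        · rw [hε'def, Function.update_of_ne hp]
          exact hε p
      obtain ⟨t, ht, hti, htj, hrest⟩ := flip_outdeg n hij ε hε
      -- measure increases by 2
      have hmeas : (∑ m, (outdeg n ε' m) ^ 2) = (∑ m, (outdeg n ε m) ^ 2) + 2 := by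
        have hz : (∑ m, ((outdeg n ε' m : ℤ) ^ 2 - (outdeg n ε m : ℤ) ^ 2)) = 2 := by
          have hzero : ∀ m ∈ (Finset.univ : Finset (Fin n)), m ∉ ({i, j} : Finset (Fin n)) →
              ((outdeg n ε' m : ℤ) ^ 2 - (outdeg n ε m : ℤ) ^ 2) = 0 := by
            intro m _ hm
            simp only [Finset.mem_insert, Finset.mem_singleton, not_or] at hm
            rw [hrest m hm.1 hm.2]
            ring
          rw [← Finset.sum_subset (Finset.subset_univ ({i, j} : Finset (Fin n))) hzero,
            Finset.sum_pair (ne_of_lt hij)]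
          have hd : (outdeg n ε i : ℤ) = (outdeg n ε j : ℤ) := by exact_mod_cast hdij
          rcases ht with h | h <;> subst h <;> rw [hti, htj] <;> nlinarith [hd]
        have : (∑ m, (outdeg n ε' m : ℤ) ^ 2) = (∑ m, (outdeg n ε m : ℤ) ^ 2) + 2 := by
          rw [Finset.sum_sub_distrib] at hz
          linarith [hz]
        exact_mod_cast this
      have hk' : n ^ 3 ≤ (∑ m, (outdeg n ε' m) ^ 2) + k := by omega
      have hy : (fun m => (outdeg n ε' m : ℝ)) ∈ convexHull ℝ V := ih ε' hε' hk'
      have hy2 : ((fun m => (outdeg n ε' m : ℝ)) ∘ (Equiv.swap i j)) ∈ convexHull ℝ V :=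
        hull_perm (Equiv.swap i j) hy
      have hconv := (convex_convexHull ℝ V) hy hy2
        (by norm_num : (0:ℝ) ≤ 1/2) (by norm_num : (0:ℝ) ≤ 1/2) (by norm_num)
      have heq : (fun m => (outdeg n ε m : ℝ))
          = (1/2 : ℝ) • (fun m => (outdeg n ε' m : ℝ))
            + (1/2 : ℝ) • ((fun m => (outdeg n ε' m : ℝ)) ∘ (Equiv.swap i j)) := by
        funext m
        simp only [Pi.add_apply, Pi.smul_apply, Function.comp_apply, smul_eq_mul]
        by_cases hmi : m = i
        · subst hmi
          rw [Equiv.swap_apply_left]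
          have h1 : (outdeg n ε' m : ℝ) = (outdeg n ε m : ℝ) + t := by exact_mod_cast hti
          have h2 : (outdeg n ε' j : ℝ) = (outdeg n ε j : ℝ) - t := by exact_mod_cast htj
          have hd : (outdeg n ε m : ℝ) = (outdeg n ε j : ℝ) := by exact_mod_cast hdij
          rw [h1, h2, hd]
          ring
        · by_cases hmj : m = j
          · subst hmj
            rw [Equiv.swap_apply_right]
            have h1 : (outdeg n ε' m : ℝ) = (outdeg n ε m : ℝ) - t := by exact_mod_cast htj
            have h2 : (outdeg n ε' i : ℝ) = (outdeg n ε i : ℝ) + t := by exact_mod_cast hti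
            have hd : (outdeg n ε i : ℝ) = (outdeg n ε m : ℝ) := by exact_mod_cast hdij
            rw [h1, h2, hd]
            ring
          · rw [Equiv.swap_apply_of_ne_of_ne hmi hmj, hrest m hmi hmj]
            ring
      rw [heq]
      exact hconv

private lemma sum_range_card_le : ∀ (k : ℕ) (T : Finset ℕ), T.card = k →
    ∑ i ∈ Finset.range k, i ≤ ∑ t ∈ T, t := by
  intro k
  induction k with
  | zero => intro T _; simp
  | succ k ih =>
    intro T hT
    have hne : T.Nonempty := Finset.card_pos.mp (by omega)
    set M := T.max' hne with hM
    have hMem : M ∈ T := T.max'_mem hne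
    have hcard : (T.erase M).card = k := by rw [Finset.card_erase_of_mem hMem]; omega
    have hMk : k ≤ M := by
      have hsub : T ⊆ Finset.range (M + 1) := fun t ht =>
        Finset.mem_range.mpr (Nat.lt_succ_of_le (Finset.le_max' T t ht))
      have := Finset.card_le_card hsub
      rw [Finset.card_range] at this; omega
    calc ∑ i ∈ Finset.range (k + 1), i = (∑ i ∈ Finset.range k, i) + k :=
          Finset.sum_range_succ _ _
      _ ≤ (∑ t ∈ T.erase M, t) + M := Nat.add_le_add (ih _ hcard) hMk
      _ = ∑ t ∈ T, t := Finset.sum_erase_add _ _ hMem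

private lemma hull_sum_lower (n : ℕ) {x : Fin n → ℝ}
    (hx : x ∈ convexHull ℝ {y : Fin n → ℝ | ∃ σ : Equiv.Perm (Fin n), y = fun m => ((σ m : ℕ) : ℝ)})
    (S : Finset (Fin n)) :
    ((∑ i ∈ Finset.range S.card, i : ℕ) : ℝ) ≤ ∑ m ∈ S, x m := by
  have hlin : IsLinearMap ℝ (fun y : Fin n → ℝ => ∑ m ∈ S, y m) := by
    constructor
    · intro y z; simp [Finset.sum_add_distrib]
    · intro c y; simp [Finset.mul_sum]
  have hconv : Convex ℝ {y : Fin n → ℝ |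
      ((∑ i ∈ Finset.range S.card, i : ℕ) : ℝ) ≤ ∑ m ∈ S, y m} :=
    convex_halfSpace_ge hlin _
  refine convexHull_min ?_ hconv hx
  rintro y ⟨σ, rfl⟩
  show ((∑ i ∈ Finset.range S.card, i : ℕ) : ℝ) ≤ ∑ m ∈ S, ((σ m : ℕ) : ℝ)
  rw [← Nat.cast_sum]
  have hinj : Set.InjOn (fun m => ((σ m : ℕ))) S := fun a _ b _ hab =>
    σ.injective (Fin.val_injective hab)
  have himg : ∑ t ∈ S.image (fun m => ((σ m : ℕ))), t = ∑ m ∈ S, (σ m : ℕ) :=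
    Finset.sum_image (fun a ha b hb h => hinj ha hb h)
  have hcard : (S.image (fun m => ((σ m : ℕ)))).card = S.card :=
    Finset.card_image_of_injOn hinj
  have := sum_range_card_le S.card (S.image (fun m => ((σ m : ℕ)))) hcard
  rw [himg] at this
  exact_mod_cast this

private lemma hull_sum_eq (n : ℕ) {x : Fin n → ℝ}
    (hx : x ∈ convexHull ℝ {y : Fin n → ℝ | ∃ σ : Equiv.Perm (Fin n), y = fun m => ((σ m : ℕ) : ℝ)}) :
    ∑ m, x m = ((∑ i ∈ Finset.range n, i : ℕ) : ℝ) := by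
  have hvert : ∀ σ : Equiv.Perm (Fin n), ∑ m, ((σ m : ℕ) : ℝ) = ((∑ i ∈ Finset.range n, i : ℕ) : ℝ) := by
    intro σ
    rw [← Nat.cast_sum]
    congr 1
    rw [Equiv.sum_comp σ (fun m : Fin n => (m : ℕ))]
    exact Fin.sum_univ_eq_sum_range (fun i => i) n
  have hle : ∑ m, x m ≤ ((∑ i ∈ Finset.range n, i : ℕ) : ℝ) := by
    have hlin : IsLinearMap ℝ (fun y : Fin n → ℝ => ∑ m, y m) := by
      constructor
      · intro y z; simp [Finset.sum_add_distrib]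
      · intro c y; simp [Finset.mul_sum]
    have hconv : Convex ℝ {y : Fin n → ℝ | ∑ m, y m ≤ ((∑ i ∈ Finset.range n, i : ℕ) : ℝ)} :=
      convex_halfSpace_le hlin _
    refine convexHull_min ?_ hconv hx
    rintro y ⟨σ, rfl⟩
    exact le_of_eq (hvert σ)
  have hge := hull_sum_lower n hx Finset.univ
  rw [Finset.card_univ, Fintype.card_fin] at hge
  linarith

private lemma card_pairsF (n : ℕ) : (pairsF n).card * 2 = n * (n - 1) := by
  have hgt : (Finset.univ.filter (fun p : Fin n × Fin n => p.2 < p.1)).card = (pairsF n).card := by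
    refine Finset.card_bij' (fun p _ => p.swap) (fun p _ => p.swap) ?_ ?_ ?_ ?_
    · intro p hp
      simp only [Finset.mem_filter, Finset.mem_univ, true_and] at hp
      simp only [pairsF, Finset.mem_filter, Finset.mem_univ, true_and, Prod.fst_swap,
        Prod.snd_swap]
      exact hp
    · intro p hp
      simp only [pairsF, Finset.mem_filter, Finset.mem_univ, true_and] at hp
      simp only [Finset.mem_filter, Finset.mem_univ, true_and, Prod.fst_swap, Prod.snd_swap]
      exact hp
    · intro p _; exact Prod.swap_swap p
    · intro p _; exact Prod.swap_swap p
  have heqset : (Finset.univ.filter (fun p : Fin n × Fin n => p.2 = p.1))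
      = Finset.univ.image (fun k : Fin n => (k, k)) := by
    ext p
    simp only [Finset.mem_filter, Finset.mem_univ, true_and, Finset.mem_image]
    constructor
    · intro h; exact ⟨p.1, Prod.ext rfl h.symm⟩
    · rintro ⟨k, -, rfl⟩; rfl
  have heq : (Finset.univ.filter (fun p : Fin n × Fin n => p.2 = p.1)).card = n := by
    rw [heqset, Finset.card_image_of_injective _ (fun a b h => (Prod.ext_iff.mp h).1),
      Finset.card_univ, Fintype.card_fin]
  have hsplit : (pairsF n).card +
      ((Finset.univ.filter (fun p : Fin n × Fin n => ¬ p.1 < p.2)).card)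
      = n * n := by
    rw [pairsF, Finset.card_filter_add_card_filter_not]
    simp [Finset.card_univ]
  have hsplit2 : (Finset.univ.filter (fun p : Fin n × Fin n => ¬ p.1 < p.2))
      = (Finset.univ.filter (fun p : Fin n × Fin n => p.2 < p.1))
        ∪ (Finset.univ.filter (fun p : Fin n × Fin n => p.2 = p.1)) := by
    ext p
    simp only [Finset.mem_filter, Finset.mem_univ, true_and, Finset.mem_union, not_lt]
    rw [le_iff_lt_or_eq]
  have hdisj : Disjoint (Finset.univ.filter (fun p : Fin n × Fin n => p.2 < p.1))
      (Finset.univ.filter (fun p : Fin n × Fin n => p.2 = p.1)) := by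
    rw [Finset.disjoint_left]
    intro p hp hq
    simp only [Finset.mem_filter, Finset.mem_univ, true_and] at hp hq
    exact absurd (hq ▸ hp) (lt_irrefl _)
  rw [hsplit2, Finset.card_union_of_disjoint hdisj, hgt, heq] at hsplit
  cases n with
  | zero => omega
  | succ m =>
    have h1 : (m + 1) * (m + 1) = (m + 1) * m + (m + 1) := by ring
    have h2 : (m + 1 : ℕ) - 1 = m := by omega
    rw [h2]
    omega

private def slots (n : ℕ) (xn : Fin n → ℕ) (i : Fin n) : Finset (Fin n × ℕ) :=
  {i} ×ˢ Finset.range (xn i)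

private lemma mem_slots {n : ℕ} {xn : Fin n → ℕ} {i : Fin n} {b : Fin n × ℕ} :
    b ∈ slots n xn i ↔ b.1 = i ∧ b.2 < xn i := by
  unfold slots
  rw [Finset.mem_product, Finset.mem_singleton, Finset.mem_range]

private lemma card_slots (n : ℕ) (xn : Fin n → ℕ) (i : Fin n) : (slots n xn i).card = xn i := by
  simp [slots]

private lemma slots_disjoint (n : ℕ) (xn : Fin n → ℕ) {i j : Fin n} (hij : i ≠ j) :
    Disjoint (slots n xn i) (slots n xn j) := by
  rw [Finset.disjoint_left]
  intro b hb hb'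
  rw [mem_slots] at hb hb'
  exact hij (hb.1 ▸ hb'.1 ▸ rfl)

private lemma card_biUnion_slots (n : ℕ) (xn : Fin n → ℕ) (V : Finset (Fin n)) :
    (V.biUnion (slots n xn)).card = ∑ i ∈ V, xn i := by
  rw [Finset.card_biUnion]
  · exact Finset.sum_congr rfl fun i _ => card_slots n xn i
  · intro i _ j _ hij
    exact slots_disjoint n xn hij

private lemma exists_eps (n : ℕ) (x : Fin n → ℝ)
    (hx : x ∈ convexHull ℝ {y : Fin n → ℝ | ∃ σ : Equiv.Perm (Fin n), y = fun m => ((σ m : ℕ) : ℝ)})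
    (z : Fin n → ℤ) (hz : x = fun m => ((z m : ℤ) : ℝ)) :
    ∃ ε : Fin n × Fin n → ℝ, (∀ p, ε p = 1 ∨ ε p = -1) ∧ ∀ m, x m = (outdeg n ε m : ℝ) := by
  classical
  have hnonneg : ∀ m, (0:ℝ) ≤ x m := by
    intro m
    have h := hull_sum_lower n hx {m}
    simpa using h
  set xn : Fin n → ℕ := fun m => (z m).toNat with hxn_def
  have hxn : ∀ m, (xn m : ℝ) = x m := by
    intro m
    have hxm : x m = (z m : ℝ) := congrFun hz m
    have h0 : (0:ℤ) ≤ z m := by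
      have := hnonneg m
      rw [hxm] at this
      exact_mod_cast this
    have h1 : ((z m).toNat : ℤ) = z m := Int.toNat_of_nonneg h0
    rw [hxm]
    show (((z m).toNat : ℕ) : ℝ) = ((z m : ℤ) : ℝ)
    exact_mod_cast h1
  have hsubset : ∀ S : Finset (Fin n), ∑ i ∈ Finset.range S.card, i ≤ ∑ m ∈ S, xn m := by
    intro S
    have h := hull_sum_lower n hx S
    have h2 : ∑ m ∈ S, x m = ((∑ m ∈ S, xn m : ℕ) : ℝ) := by
      rw [Nat.cast_sum]
      exact Finset.sum_congr rfl fun m _ => (hxn m).symm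
    rw [h2] at h
    exact_mod_cast h
  have htotal : ∑ m, xn m = ∑ i ∈ Finset.range n, i := by
    have h := hull_sum_eq n hx
    have h2 : ∑ m, x m = ((∑ m, xn m : ℕ) : ℝ) := by
      rw [Nat.cast_sum]
      exact Finset.sum_congr rfl fun m _ => (hxn m).symm
    rw [h2] at h
    exact_mod_cast h
  set t : {p : Fin n × Fin n // p.1 < p.2} → Finset (Fin n × ℕ) :=
    fun p => slots n xn p.1.1 ∪ slots n xn p.1.2 with ht_def
  have hhall : ∀ s : Finset {p : Fin n × Fin n // p.1 < p.2}, s.card ≤ (s.biUnion t).card := by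
    intro s
    set Vs := s.image (fun p : {p : Fin n × Fin n // p.1 < p.2} => p.1.1)
      ∪ s.image (fun p : {p : Fin n × Fin n // p.1 < p.2} => p.1.2) with hVs
    have hsub : Vs.biUnion (slots n xn) ⊆ s.biUnion t := by
      refine Finset.biUnion_subset.mpr ?_
      intro i hi
      rw [hVs, Finset.mem_union, Finset.mem_image, Finset.mem_image] at hi
      rcases hi with ⟨p, hp, hpi⟩ | ⟨p, hp, hpi⟩
      · refine subset_trans ?_ (Finset.subset_biUnion_of_mem t hp)
        rw [← hpi, ht_def]
        exact Finset.subset_union_left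
      · refine subset_trans ?_ (Finset.subset_biUnion_of_mem t hp)
        rw [← hpi, ht_def]
        exact Finset.subset_union_right
    have hcount : s.card ≤ ∑ i ∈ Finset.range Vs.card, i := by
      have hinj2 : s.card ≤ (Finset.powersetCard 2 Vs).card := by
        apply Finset.card_le_card_of_injOn
          (fun p : {p : Fin n × Fin n // p.1 < p.2} => ({p.1.1, p.1.2} : Finset (Fin n)))
        · intro p hp
          rw [Finset.mem_coe, Finset.mem_powersetCard]
          constructor
          · intro a ha
            rw [Finset.mem_insert, Finset.mem_singleton] at ha
            rcases ha with rfl | rfl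
            · exact Finset.mem_union_left _ (Finset.mem_image_of_mem _ hp)
            · exact Finset.mem_union_right _ (Finset.mem_image_of_mem _ hp)
          · rw [Finset.card_insert_of_notMem, Finset.card_singleton]
            rw [Finset.mem_singleton]
            exact ne_of_lt p.2
        · intro p hp q hq hpq
          have hpq' : ({q.1.1, q.1.2} : Finset (Fin n)) = {p.1.1, p.1.2} := hpq.symm
          have hq1 : q.1.1 ∈ ({p.1.1, p.1.2} : Finset (Fin n)) := by
            rw [← hpq']
            exact Finset.mem_insert_self _ _
          have hq2 : q.1.2 ∈ ({p.1.1, p.1.2} : Finset (Fin n)) := by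
            rw [← hpq']
            exact Finset.mem_insert_of_mem (Finset.mem_singleton_self _)
          rw [Finset.mem_insert, Finset.mem_singleton] at hq1 hq2
          have hv1 : q.1.1.val = p.1.1.val ∨ q.1.1.val = p.1.2.val :=
            hq1.imp (congrArg Fin.val) (congrArg Fin.val)
          have hv2 : q.1.2.val = p.1.1.val ∨ q.1.2.val = p.1.2.val :=
            hq2.imp (congrArg Fin.val) (congrArg Fin.val)
          have hplt : p.1.1.val < p.1.2.val := p.2
          have hqlt : q.1.1.val < q.1.2.val := q.2
          have hvv : p.1.1.val = q.1.1.val ∧ p.1.2.val = q.1.2.val := by omega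
          exact Subtype.ext (Prod.ext (Fin.ext hvv.1) (Fin.ext hvv.2))
      have hps : (Finset.powersetCard 2 Vs).card = ∑ i ∈ Finset.range Vs.card, i := by
        rw [Finset.card_powersetCard, Nat.choose_two_right, Finset.sum_range_id]
      omega
    calc s.card ≤ ∑ i ∈ Finset.range Vs.card, i := hcount
      _ ≤ ∑ i ∈ Vs, xn i := hsubset Vs
      _ = (Vs.biUnion (slots n xn)).card := (card_biUnion_slots n xn Vs).symm
      _ ≤ (s.biUnion t).card := Finset.card_le_card hsub
  obtain ⟨f, hfinj, hft⟩ := (Finset.all_card_le_biUnion_card_iff_exists_injective t).mp hhall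
  have hcard_pairs : Fintype.card {p : Fin n × Fin n // p.1 < p.2} = ∑ i, xn i := by
    rw [Fintype.card_subtype]
    have h1 := card_pairsF n
    rw [pairsF_def] at h1
    have h2 := Finset.sum_range_id_mul_two n
    have h3 : (∑ i, xn i) * 2 = n * (n - 1) := by rw [htotal]; exact h2
    omega
  have himage : Finset.univ.image f = Finset.univ.biUnion (slots n xn) := by
    apply Finset.eq_of_subset_of_card_le
    · intro b hb
      rw [Finset.mem_image] at hb
      obtain ⟨p, -, rfl⟩ := hb
      have hfp := hft p
      rw [ht_def, Finset.mem_union] at hfp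
      rcases hfp with h | h
      · exact Finset.mem_biUnion.mpr ⟨p.1.1, Finset.mem_univ _, h⟩
      · exact Finset.mem_biUnion.mpr ⟨p.1.2, Finset.mem_univ _, h⟩
    · rw [card_biUnion_slots, Finset.card_image_of_injective _ hfinj, Finset.card_univ,
        hcard_pairs]
  set ε : Fin n × Fin n → ℝ :=
    fun p => if h : p.1 < p.2 then (if (f ⟨p, h⟩).1 = p.1 then 1 else -1) else 1 with hε_def
  have hε : ∀ p, ε p = 1 ∨ ε p = -1 := by
    intro p
    rw [hε_def]
    beta_reduce
    by_cases h : p.1 < p.2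
    · rw [dif_pos h]
      by_cases h2 : (f ⟨p, h⟩).1 = p.1
      · rw [if_pos h2]; left; rfl
      · rw [if_neg h2]; right; rfl
    · rw [dif_neg h]; left; rfl
  refine ⟨ε, hε, ?_⟩
  intro m
  rw [← hxn m]
  congr 1
  -- xn m = outdeg n ε m
  have hstep1 : outdeg n ε m
      = (Finset.univ.filter
          (fun p : {p : Fin n × Fin n // p.1 < p.2} => (f p).1 = m)).card := by
    rw [outdeg_def2, pairsF_def, ← Finset.univ_map_subtype, Finset.filter_map,
      Finset.card_map]
    congr 1
    ext p
    simp only [Finset.mem_filter, Finset.mem_univ, true_and, Function.comp_apply,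
      Function.Embedding.coe_subtype]
    have hfp : (f p).1 = p.1.1 ∨ (f p).1 = p.1.2 := by
      have h := hft p
      rw [ht_def, Finset.mem_union, mem_slots, mem_slots] at h
      exact h.imp And.left And.left
    have hεval : ε p.val = if (f p).1 = p.val.1 then (1:ℝ) else -1 := dif_pos p.2
    refine (Finset.mem_filter.trans ?_)
    simp only [Finset.mem_univ, true_and, Function.comp_apply]
    by_cases hw : (f p).1 = p.val.1
    · rw [hεval, if_pos hw]
      constructor
      · rintro (⟨h1, -⟩ | ⟨-, h2⟩)
        · exact hw.trans h1
        · exact absurd rfl h2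
      · intro h
        exact Or.inl ⟨hw.symm.trans h, rfl⟩
    · have hw2 : (f p).1 = p.val.2 := hfp.resolve_left hw
      rw [hεval, if_neg hw]
      constructor
      · rintro (⟨h1, h2⟩ | ⟨h1, -⟩)
        · exact absurd h2 (by norm_num)
        · exact hw2.trans h1
      · intro h
        refine Or.inr ⟨hw2.symm.trans h, by norm_num⟩
  rw [hstep1]
  have h2 : (Finset.univ.filter
        (fun p : {p : Fin n × Fin n // p.1 < p.2} => (f p).1 = m)).card
      = ((Finset.univ.image f).filter (fun b => b.1 = m)).card := by
    rw [Finset.filter_image]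
    exact (Finset.card_image_of_injective _ hfinj).symm
  rw [h2, himage]
  have h3 : (Finset.univ.biUnion (slots n xn)).filter (fun b => b.1 = m) = slots n xn m := by
    ext b
    simp only [Finset.mem_filter, Finset.mem_biUnion, Finset.mem_univ, true_and]
    constructor
    · rintro ⟨⟨i, hbi⟩, hbm⟩
      rw [mem_slots] at hbi ⊢
      refine ⟨hbm, ?_⟩
      rw [← hbi.1.symm.trans hbm]
      exact hbi.2
    · intro hb
      have := mem_slots.mp hb
      exact ⟨⟨m, hb⟩, this.1⟩
  rw [h3]
  exact (card_slots n xn m).symm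

/-- Let `P_n ⊂ ℝ^n` be the permutahedron, the convex hull of the points
whose coordinates are the permutations of `(n-1, …, 1, 0)`.  For each choice of signs
`ε = (ε_{ij})_{i<j} ∈ {±1}`, the point
`p_ε = ((n-1)/2, …, (n-1)/2) + Σ_{i<j} ε_{ij}·(1/2)(e_i − e_j)`
is an integer point lying in `P_n`, and conversely every integer point of `P_n`
equals `p_ε` for some choice of signs `ε`. -/
theorem permutahedron_integer_points (n : ℕ) (hn : 1 ≤ n) :
    let Pn : Set (Fin n → ℝ) :=
      convexHull ℝ {x : Fin n → ℝ | ∃ σ : Equiv.Perm (Fin n), x = fun m => ((σ m : ℕ) : ℝ)}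
    let pPt : (Fin n × Fin n → ℝ) → (Fin n → ℝ) := fun ε =>
      (fun _ : Fin n => ((n : ℝ) - 1) / 2) +
        ∑ p ∈ Finset.univ.filter (fun p : Fin n × Fin n => p.1 < p.2),
          (ε p * (1 / 2)) • (Pi.single p.1 (1 : ℝ) - Pi.single p.2 (1 : ℝ))
    (∀ ε : Fin n × Fin n → ℝ, (∀ p, ε p = 1 ∨ ε p = -1) →
        pPt ε ∈ Pn ∧ ∃ z : Fin n → ℤ, pPt ε = fun m => ((z m : ℤ) : ℝ)) ∧
    (∀ x ∈ Pn, (∃ z : Fin n → ℤ, x = fun m => ((z m : ℤ) : ℝ)) →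
        ∃ ε : Fin n × Fin n → ℝ, (∀ p, ε p = 1 ∨ ε p = -1) ∧ x = pPt ε) := by
  intro Pn pPt
  constructor
  · intro ε hε
    have hA : pPt ε = fun m => ((outdeg n ε m : ℕ) : ℝ) := pPt_eq n hn ε hε
    constructor
    · rw [hA]
      exact score_mem_hull n hn ε hε
    · refine ⟨fun m => ((outdeg n ε m : ℕ) : ℤ), ?_⟩
      rw [hA]
      funext m
      norm_cast
  · rintro x hx ⟨z, hz⟩
    obtain ⟨ε, hε, hout⟩ := exists_eps n x hx z hz
    refine ⟨ε, hε, ?_⟩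
    have hA : pPt ε = fun m => ((outdeg n ε m : ℕ) : ℝ) := pPt_eq n hn ε hε
    rw [hA]
    funext m
    exact hout m
end

section
/- Let n ≥ 2 and let (ℓ_{ij})_{1≤i<j≤n} be nonnegative integers. Let P_L ⊂ ℝ^n be the Minkowski sum over all pairs i < j of the line segments [ℓ_{ij}·e_i, ℓ_{ij}·e_j] (the convex hull of the two points ℓ_{ij}e_i and ℓ_{ij}e_j). Then the set of integer points P_L ∩ ℤ^n equals the set of all vectors of the form Σ_{i<j} (a_{ij} e_i + b_{ij} e_j), where a_{ij}, b_{ij} are nonnegative integers with a_{ij} + b_{ij} = ℓ_{ij} for each pair i < j. -/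
open Pointwise

lemma sum_is_int {ι : Type*} (s : Finset ι) (f : ι → ℝ)
    (h : ∀ p ∈ s, ∃ z : ℤ, f p = (z : ℝ)) : ∃ z : ℤ, ∑ p ∈ s, f p = (z : ℝ) := by
  classical
  induction s using Finset.induction_on with
  | empty => exact ⟨0, by simp⟩
  | @insert i s' hns ih =>
    obtain ⟨z1, hz1⟩ := h i (Finset.mem_insert_self _ _)
    obtain ⟨z2, hz2⟩ := ih fun p hp => h p (Finset.mem_insert_of_mem hp)
    exact ⟨z1 + z2, by rw [Finset.sum_insert hns, hz1, hz2]; push_cast; ring⟩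

open scoped Classical in
lemma exists_nat_solution {n : ℕ} (E : Finset (Fin n × Fin n))
    (ℓ : Fin n × Fin n → ℕ) :
    ∀ k : ℕ, ∀ a : Fin n × Fin n → ℝ,
      (∀ p ∈ E, 0 ≤ a p) → (∀ p ∈ E, a p ≤ (ℓ p : ℝ)) →
      (∀ m : Fin n, ∃ z : ℤ,
        (∑ p ∈ E.filter (fun p => p.1 = m), a p)
          - (∑ p ∈ E.filter (fun p => p.2 = m), a p) = (z : ℝ)) →
      (E.filter (fun p => ¬ ∃ z : ℤ, a p = (z : ℝ))).card ≤ k →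
      ∃ A : Fin n × Fin n → ℕ, (∀ p ∈ E, A p ≤ ℓ p) ∧
        ∀ m : Fin n,
          (∑ p ∈ E.filter (fun p => p.1 = m), (A p : ℝ))
            - (∑ p ∈ E.filter (fun p => p.2 = m), (A p : ℝ))
          = (∑ p ∈ E.filter (fun p => p.1 = m), a p)
            - (∑ p ∈ E.filter (fun p => p.2 = m), a p) := by
  intro k
  induction k with
  | zero =>
    intro a h0 h1 hint hcard
    have hF : ∀ p ∈ E, ∃ z : ℤ, a p = (z : ℝ) := by
      intro p hp
      by_contra hc
      have hmem : p ∈ E.filter (fun p => ¬ ∃ z : ℤ, a p = (z : ℝ)) :=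
        Finset.mem_filter.2 ⟨hp, hc⟩
      have := Finset.card_pos.2 ⟨p, hmem⟩
      omega
    have hval : ∀ p ∈ E, (((⌊a p⌋).toNat : ℕ) : ℝ) = a p := by
      intro p hp
      obtain ⟨z, hz⟩ := hF p hp
      have hfl : ⌊a p⌋ = z := by rw [hz]; exact Int.floor_intCast z
      have hz0 : (0 : ℤ) ≤ z := by
        have := h0 p hp
        rw [hz] at this
        exact_mod_cast this
      rw [hfl, hz]
      exact_mod_cast Int.toNat_of_nonneg hz0
    refine ⟨fun p => (⌊a p⌋).toNat, ?_, ?_⟩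
    · intro p hp
      have := hval p hp
      have hle := h1 p hp
      have : ((((⌊a p⌋).toNat : ℕ)) : ℝ) ≤ ((ℓ p : ℕ) : ℝ) := by rw [this]; exact hle
      exact_mod_cast this
    · intro m
      have e1 : ∑ p ∈ E.filter (fun p => p.1 = m), (((⌊a p⌋).toNat : ℕ) : ℝ)
          = ∑ p ∈ E.filter (fun p => p.1 = m), a p :=
        Finset.sum_congr rfl fun p hp => hval p (Finset.filter_subset _ _ hp)
      have e2 : ∑ p ∈ E.filter (fun p => p.2 = m), (((⌊a p⌋).toNat : ℕ) : ℝ)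
          = ∑ p ∈ E.filter (fun p => p.2 = m), a p :=
        Finset.sum_congr rfl fun p hp => hval p (Finset.filter_subset _ _ hp)
      rw [e1, e2]
  | succ k IH =>
    intro a h0 h1 hint hcard
    by_cases hsmall : (E.filter (fun p => ¬ ∃ z : ℤ, a p = (z : ℝ))).card ≤ k
    · exact IH a h0 h1 hint hsmall
    set F := E.filter (fun p => ¬ ∃ z : ℤ, a p = (z : ℝ)) with hFdef
    have hcardF : F.card = k + 1 := le_antisymm hcard (by omega)
    have hFE : F ⊆ E := Finset.filter_subset _ _
    have hFne : F.Nonempty := Finset.card_pos.1 (by omega)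
    set V := F.image Prod.fst ∪ F.image Prod.snd with hVdef
    have hmemV : ∀ p ∈ F, p.1 ∈ V ∧ p.2 ∈ V := fun p hp =>
      ⟨Finset.mem_union_left _ (Finset.mem_image_of_mem _ hp),
       Finset.mem_union_right _ (Finset.mem_image_of_mem _ hp)⟩
    -- every vertex of V has at least two incident fractional edges
    have hdeg : ∀ v ∈ V,
        2 ≤ (F.filter (fun p => p.1 = v)).card + (F.filter (fun p => p.2 = v)).card := by
      intro v hv
      have hone : 1 ≤ (F.filter (fun p => p.1 = v)).card
          + (F.filter (fun p => p.2 = v)).card := by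
        rcases Finset.mem_union.1 hv with h | h
        · obtain ⟨p, hp, hpv⟩ := Finset.mem_image.1 h
          have hmem : p ∈ F.filter (fun p => p.1 = v) := Finset.mem_filter.2 ⟨hp, hpv⟩
          have := Finset.card_pos.2 ⟨p, hmem⟩
          omega
        · obtain ⟨p, hp, hpv⟩ := Finset.mem_image.1 h
          have hmem : p ∈ F.filter (fun p => p.2 = v) := Finset.mem_filter.2 ⟨hp, hpv⟩
          have := Finset.card_pos.2 ⟨p, hmem⟩
          omega
      by_contra hlt2
      have hone' : (F.filter (fun p => p.1 = v)).card
          + (F.filter (fun p => p.2 = v)).card = 1 := by omega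
      -- split balance at v into fractional and integral parts
      have hsplit : ∀ P : Fin n × Fin n → Prop,
          (E.filter P).filter (fun p => ¬ ∃ z : ℤ, a p = (z : ℝ)) = F.filter P := by
        intro P
        ext p
        simp only [Finset.mem_filter, hFdef]
        tauto
      obtain ⟨z, hz⟩ := hint v
      obtain ⟨w1, hw1⟩ := sum_is_int
          ((E.filter (fun p => p.1 = v)).filter (fun p => ∃ z : ℤ, a p = (z : ℝ))) a
          (fun p hp => (Finset.mem_filter.1 hp).2)
      obtain ⟨w2, hw2⟩ := sum_is_int
          ((E.filter (fun p => p.2 = v)).filter (fun p => ∃ z : ℤ, a p = (z : ℝ))) a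
          (fun p hp => (Finset.mem_filter.1 hp).2)
      have hsum1 : ∑ p ∈ E.filter (fun p => p.1 = v), a p
          = (w1 : ℝ) + ∑ p ∈ F.filter (fun p => p.1 = v), a p := by
        rw [← Finset.sum_filter_add_sum_filter_not (E.filter (fun p => p.1 = v))
          (fun p => ∃ z : ℤ, a p = (z : ℝ)) a, hw1]
        congr 1
        exact Finset.sum_congr (by ext p; simp only [Finset.mem_filter, hFdef]; tauto)
          (fun _ _ => rfl)
      have hsum2 : ∑ p ∈ E.filter (fun p => p.2 = v), a p
          = (w2 : ℝ) + ∑ p ∈ F.filter (fun p => p.2 = v), a p := by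
        rw [← Finset.sum_filter_add_sum_filter_not (E.filter (fun p => p.2 = v))
          (fun p => ∃ z : ℤ, a p = (z : ℝ)) a, hw2]
        congr 1
        exact Finset.sum_congr (by ext p; simp only [Finset.mem_filter, hFdef]; tauto)
          (fun _ _ => rfl)
      rw [hsum1, hsum2] at hz
      -- now exactly one fractional edge at v
      have hcases : ((F.filter (fun p => p.1 = v)).card = 1
            ∧ (F.filter (fun p => p.2 = v)).card = 0)
          ∨ ((F.filter (fun p => p.1 = v)).card = 0
            ∧ (F.filter (fun p => p.2 = v)).card = 1) := by omega
      rcases hcases with ⟨hc1, hc2⟩ | ⟨hc1, hc2⟩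
      · obtain ⟨p, hp⟩ := Finset.card_eq_one.1 hc1
        have h2 : F.filter (fun p => p.2 = v) = ∅ := Finset.card_eq_zero.1 hc2
        rw [hp, h2, Finset.sum_singleton, Finset.sum_empty] at hz
        have hpF : p ∈ F := (Finset.mem_filter.1 (hp ▸ Finset.mem_singleton_self p)).1
        exact (Finset.mem_filter.1 hpF).2 ⟨z - w1 + w2, by push_cast; linarith⟩
      · obtain ⟨p, hp⟩ := Finset.card_eq_one.1 hc2
        have h2 : F.filter (fun p => p.1 = v) = ∅ := Finset.card_eq_zero.1 hc1
        rw [hp, h2, Finset.sum_singleton, Finset.sum_empty] at hz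
        have hpF : p ∈ F := (Finset.mem_filter.1 (hp ▸ Finset.mem_singleton_self p)).1
        exact (Finset.mem_filter.1 hpF).2 ⟨w1 - w2 - z, by push_cast; linarith⟩
    -- counting: |V| ≤ |F|
    have hcount1 : ∑ v ∈ V, (F.filter (fun p => p.1 = v)).card = F.card :=
      (Finset.card_eq_sum_card_fiberwise (fun p hp => (hmemV p hp).1)).symm
    have hcount2 : ∑ v ∈ V, (F.filter (fun p => p.2 = v)).card = F.card :=
      (Finset.card_eq_sum_card_fiberwise (fun p hp => (hmemV p hp).2)).symm
    have hVF : V.card ≤ F.card := by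
      have h2 : V.card * 2 ≤ ∑ v ∈ V,
          ((F.filter (fun p => p.1 = v)).card + (F.filter (fun p => p.2 = v)).card) := by
        rw [← Finset.sum_const_nat (m := 2) (fun _ _ => rfl)]
        exact Finset.sum_le_sum hdeg
      rw [Finset.sum_add_distrib, hcount1, hcount2] at h2
      omega
    obtain ⟨p₀, hp₀⟩ := hFne
    set v₀ := p₀.1 with hv₀def
    have hv₀ : v₀ ∈ V := (hmemV p₀ hp₀).1
    set W := V.erase v₀ with hWdef
    have hWcard : W.card < F.card := by
      have h1 : W.card = V.card - 1 := Finset.card_erase_of_mem hv₀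
      have h2 : 0 < V.card := Finset.card_pos.2 ⟨v₀, hv₀⟩
      omega
    -- find a kernel vector of the incidence matrix restricted to F-columns
    set M : Matrix {w // w ∈ W} {p // p ∈ F} ℝ := Matrix.of fun w p =>
      (if (p : Fin n × Fin n).1 = (w : Fin n) then (1:ℝ) else 0)
        - (if (p : Fin n × Fin n).2 = (w : Fin n) then (1:ℝ) else 0) with hMdef
    obtain ⟨d, hdker, hd0⟩ : ∃ d : {p // p ∈ F} → ℝ, M.mulVecLin d = 0 ∧ d ≠ 0 := by
      have hni : ¬ Function.Injective M.mulVecLin := by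
        intro hinj
        have hle := LinearMap.finrank_le_finrank_of_injective hinj
        rw [Module.finrank_fintype_fun_eq_card, Module.finrank_fintype_fun_eq_card,
          Fintype.card_coe, Fintype.card_coe] at hle
        omega
      obtain ⟨x, y, hxy, hne⟩ := Function.not_injective_iff.1 hni
      exact ⟨x - y, by rw [map_sub, hxy, sub_self], sub_ne_zero.2 hne⟩
    set D : Fin n × Fin n → ℝ := fun p => if h : p ∈ F then d ⟨p, h⟩ else 0 with hDdef
    have hDF : ∀ p, p ∉ F → D p = 0 := fun p hp => dif_neg hp
    -- the "divergence" of D vanishes everywhere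
    have hg : ∀ m : Fin n, (∑ p ∈ F.filter (fun p => p.1 = m), D p)
        - (∑ p ∈ F.filter (fun p => p.2 = m), D p) = 0 := by
      have hW : ∀ w, (hw : w ∈ W) → (∑ p ∈ F.filter (fun p => p.1 = w), D p)
          - (∑ p ∈ F.filter (fun p => p.2 = w), D p) = 0 := by
        intro w hw
        have h0' := congrFun hdker ⟨w, hw⟩
        rw [Matrix.mulVecLin_apply] at h0'
        have hsum : ∑ p ∈ F.attach,
            ((if (p : Fin n × Fin n).1 = w then (1:ℝ) else 0)
              - (if (p : Fin n × Fin n).2 = w then (1:ℝ) else 0)) * d p = 0 := by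
          simpa [Matrix.mulVec, dotProduct, hMdef] using h0'
        have hsum2 : ∑ p ∈ F,
            ((if p.1 = w then (1:ℝ) else 0) - (if p.2 = w then (1:ℝ) else 0)) * D p = 0 := by
          have e : ∑ p ∈ F,
              ((if p.1 = w then (1:ℝ) else 0) - (if p.2 = w then (1:ℝ) else 0)) * D p
              = ∑ p ∈ F.attach,
              ((if (p : Fin n × Fin n).1 = w then (1:ℝ) else 0)
                - (if (p : Fin n × Fin n).2 = w then (1:ℝ) else 0)) * d p := by
            rw [← Finset.sum_attach F (fun p =>
              ((if p.1 = w then (1:ℝ) else 0) - (if p.2 = w then (1:ℝ) else 0)) * D p)]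
            refine Finset.sum_congr rfl fun p _ => ?_
            congr 1
            simp only [hDdef]
            rw [dif_pos p.2]
          rw [e]
          exact hsum
        have hsplit2 : ∑ p ∈ F,
            ((if p.1 = w then (1:ℝ) else 0) - (if p.2 = w then (1:ℝ) else 0)) * D p
            = (∑ p ∈ F.filter (fun p => p.1 = w), D p)
              - (∑ p ∈ F.filter (fun p => p.2 = w), D p) := by
          simp only [Finset.sum_filter]
          rw [← Finset.sum_sub_distrib]
          refine Finset.sum_congr rfl fun p _ => ?_
          by_cases h1 : p.1 = w <;> by_cases h2 : p.2 = w <;> simp [h1, h2]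
        rw [← hsplit2]
        exact hsum2
      have hnotV : ∀ m, m ∉ V → (∑ p ∈ F.filter (fun p => p.1 = m), D p)
          - (∑ p ∈ F.filter (fun p => p.2 = m), D p) = 0 := by
        intro m hm
        have e1 : F.filter (fun p => p.1 = m) = ∅ := by
          rw [Finset.filter_eq_empty_iff]
          intro q hq hqm
          exact hm (hqm ▸ (hmemV q hq).1)
        have e2 : F.filter (fun p => p.2 = m) = ∅ := by
          rw [Finset.filter_eq_empty_iff]
          intro q hq hqm
          exact hm (hqm ▸ (hmemV q hq).2)
        rw [e1, e2]; simp
      have htot : ∑ m : Fin n, ((∑ p ∈ F.filter (fun p => p.1 = m), D p)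
          - (∑ p ∈ F.filter (fun p => p.2 = m), D p)) = 0 := by
        rw [Finset.sum_sub_distrib,
          Finset.sum_fiberwise_of_maps_to (g := Prod.fst) (fun p _ => Finset.mem_univ p.1) D,
          Finset.sum_fiberwise_of_maps_to (g := Prod.snd) (fun p _ => Finset.mem_univ p.2) D,
          sub_self]
      intro m
      by_cases hmv : m = v₀
      · rw [← Finset.add_sum_erase Finset.univ _ (Finset.mem_univ v₀)] at htot
        have hrest : ∀ m' ∈ Finset.univ.erase v₀,
            (∑ p ∈ F.filter (fun p => p.1 = m'), D p)
              - (∑ p ∈ F.filter (fun p => p.2 = m'), D p) = 0 := by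
          intro m' hm'
          have hne := (Finset.mem_erase.1 hm').1
          by_cases hmV : m' ∈ V
          · exact hW m' (Finset.mem_erase.2 ⟨hne, hmV⟩)
          · exact hnotV m' hmV
        rw [Finset.sum_eq_zero hrest, add_zero] at htot
        rw [hmv]
        exact htot
      · by_cases hmV : m ∈ V
        · exact hW m (Finset.mem_erase.2 ⟨hmv, hmV⟩)
        · exact hnotV m hmV
    -- support of D and the minimizing ratio
    set supp := F.filter (fun p => D p ≠ 0) with hsuppdef
    have hsuppne : supp.Nonempty := by
      have hex : ∃ q : {p // p ∈ F}, d q ≠ 0 := by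
        by_contra hcon
        push_neg at hcon
        exact hd0 (funext hcon)
      obtain ⟨q, hq⟩ := hex
      refine ⟨q.1, Finset.mem_filter.2 ⟨q.2, ?_⟩⟩
      simp only [hDdef]
      rw [dif_pos q.2]
      exact hq
    have hfrac : ∀ p ∈ F, ((⌊a p⌋ : ℝ) < a p ∧ a p < (⌈a p⌉ : ℝ)) := by
      intro p hp
      have hne : ¬ ∃ z : ℤ, a p = (z : ℝ) := (Finset.mem_filter.1 hp).2
      constructor
      · rcases lt_or_eq_of_le (Int.floor_le (a p)) with h | h
        · exact h
        · exact absurd ⟨⌊a p⌋, h.symm⟩ hne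
      · rcases lt_or_eq_of_le (Int.le_ceil (a p)) with h | h
        · exact h
        · exact absurd ⟨⌈a p⌉, h⟩ hne
    set r : Fin n × Fin n → ℝ := fun p =>
      if 0 < D p then ((⌈a p⌉ : ℝ) - a p) / D p else (a p - (⌊a p⌋ : ℝ)) / (- D p)
      with hrdef
    have hrpos : ∀ p ∈ supp, 0 < r p := by
      intro p hp
      obtain ⟨hpF, hpD⟩ := Finset.mem_filter.1 hp
      obtain ⟨hfl, hcl⟩ := hfrac p hpF
      by_cases hD : 0 < D p
      · simp only [hrdef, if_pos hD]
        exact div_pos (by linarith) hD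
      · have hDneg : D p < 0 := lt_of_le_of_ne (not_lt.1 hD) hpD
        simp only [hrdef, if_neg hD]
        exact div_pos (by linarith) (by linarith)
    obtain ⟨pm, hpm, hpmmin⟩ := supp.exists_min_image r hsuppne
    set δ := r pm with hδdef
    have hδpos : 0 < δ := hrpos pm hpm
    set a' : Fin n × Fin n → ℝ := fun p => a p + δ * D p with ha'def
    have ha'F : ∀ p, p ∉ F → a' p = a p := by
      intro p hp
      simp only [ha'def, hDF p hp, mul_zero, add_zero]
    have hbounds : ∀ p ∈ F, (⌊a p⌋ : ℝ) ≤ a' p ∧ a' p ≤ (⌈a p⌉ : ℝ) := by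
      intro p hp
      obtain ⟨hfl, hcl⟩ := hfrac p hp
      by_cases hD0 : D p = 0
      · simp only [ha'def, hD0, mul_zero, add_zero]
        exact ⟨le_of_lt hfl, le_of_lt hcl⟩
      have hps : p ∈ supp := Finset.mem_filter.2 ⟨hp, hD0⟩
      have hδle : δ ≤ r p := hpmmin p hps
      by_cases hD : 0 < D p
      · have h1 : δ * D p ≤ ((⌈a p⌉ : ℝ) - a p) := by
          have := mul_le_mul_of_nonneg_right hδle (le_of_lt hD)
          simp only [hrdef, if_pos hD] at this
          rwa [div_mul_cancel₀ _ (ne_of_gt hD)] at this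
        have h2 : 0 ≤ δ * D p := mul_nonneg (le_of_lt hδpos) (le_of_lt hD)
        constructor
        · simp only [ha'def]; linarith
        · simp only [ha'def]; linarith
      · have hDneg : D p < 0 := lt_of_le_of_ne (not_lt.1 hD) hD0
        have h1 : δ * (- D p) ≤ (a p - (⌊a p⌋ : ℝ)) := by
          have := mul_le_mul_of_nonneg_right hδle (le_of_lt (neg_pos.2 hDneg))
          simp only [hrdef, if_neg hD] at this
          rwa [div_mul_cancel₀ _ (ne_of_gt (neg_pos.2 hDneg))] at this
        have h2 : δ * D p ≤ 0 :=
          mul_nonpos_of_nonneg_of_nonpos (le_of_lt hδpos) (le_of_lt hDneg)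
        constructor
        · simp only [ha'def]; linarith
        · simp only [ha'def]; linarith
    have h0' : ∀ p ∈ E, 0 ≤ a' p := by
      intro p hp
      by_cases hpF : p ∈ F
      · have hfl0 : (0 : ℝ) ≤ (⌊a p⌋ : ℝ) := by
          have : (0 : ℤ) ≤ ⌊a p⌋ := Int.le_floor.2 (by exact_mod_cast h0 p hp)
          exact_mod_cast this
        linarith [(hbounds p hpF).1]
      · rw [ha'F p hpF]; exact h0 p hp
    have h1' : ∀ p ∈ E, a' p ≤ (ℓ p : ℝ) := by
      intro p hp
      by_cases hpF : p ∈ F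
      · have hcl1 : (⌈a p⌉ : ℝ) ≤ (ℓ p : ℝ) := by
          have : ⌈a p⌉ ≤ (ℓ p : ℤ) := Int.ceil_le.2 (by exact_mod_cast h1 p hp)
          exact_mod_cast this
        linarith [(hbounds p hpF).2]
      · rw [ha'F p hpF]; exact h1 p hp
    -- balances are unchanged
    have hbal : ∀ m : Fin n,
        (∑ p ∈ E.filter (fun p => p.1 = m), a' p)
          - (∑ p ∈ E.filter (fun p => p.2 = m), a' p)
        = (∑ p ∈ E.filter (fun p => p.1 = m), a p)
          - (∑ p ∈ E.filter (fun p => p.2 = m), a p) := by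
      intro m
      have hDsum : ∀ P : Fin n × Fin n → Prop, ∀ _ : DecidablePred P,
          ∑ p ∈ E.filter P, D p = ∑ p ∈ F.filter P, D p := by
        intro P hdec
        refine (Finset.sum_subset (Finset.filter_subset_filter _ hFE) ?_).symm
        intro p hpE hpF
        refine hDF p fun hpF' => hpF ?_
        exact Finset.mem_filter.2 ⟨hpF', (Finset.mem_filter.1 hpE).2⟩
      have e1 : ∑ p ∈ E.filter (fun p => p.1 = m), a' p
          = (∑ p ∈ E.filter (fun p => p.1 = m), a p)
            + δ * ∑ p ∈ F.filter (fun p => p.1 = m), D p := by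
        simp only [ha'def]
        rw [Finset.sum_add_distrib, ← Finset.mul_sum, hDsum _ _]
      have e2 : ∑ p ∈ E.filter (fun p => p.2 = m), a' p
          = (∑ p ∈ E.filter (fun p => p.2 = m), a p)
            + δ * ∑ p ∈ F.filter (fun p => p.2 = m), D p := by
        simp only [ha'def]
        rw [Finset.sum_add_distrib, ← Finset.mul_sum, hDsum _ _]
      rw [e1, e2]
      have := hg m
      ring_nf
      nlinarith [hg m]
    have hint' : ∀ m : Fin n, ∃ z : ℤ,
        (∑ p ∈ E.filter (fun p => p.1 = m), a' p)
          - (∑ p ∈ E.filter (fun p => p.2 = m), a' p) = (z : ℝ) := by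
      intro m
      obtain ⟨z, hz⟩ := hint m
      exact ⟨z, by rw [hbal m]; exact hz⟩
    -- the minimizing edge becomes integral
    have hpmF : pm ∈ F := (Finset.mem_filter.1 hpm).1
    have hpmD : D pm ≠ 0 := (Finset.mem_filter.1 hpm).2
    have hpmint : ∃ z : ℤ, a' pm = (z : ℝ) := by
      by_cases hD : 0 < D pm
      · refine ⟨⌈a pm⌉, ?_⟩
        simp only [ha'def, hδdef, hrdef, if_pos hD]
        rw [div_mul_cancel₀ _ (ne_of_gt hD)]
        ring
      · refine ⟨⌊a pm⌋, ?_⟩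
        have hDneg : D pm < 0 := lt_of_le_of_ne (not_lt.1 hD) hpmD
        simp only [ha'def, hδdef, hrdef, if_neg hD]
        have hne : D pm ≠ 0 := hpmD
        have key : (a pm - (⌊a pm⌋ : ℝ)) / (-D pm) * D pm = -(a pm - (⌊a pm⌋ : ℝ)) := by
          field_simp
        rw [key]
        ring
    have hcard' : (E.filter (fun p => ¬ ∃ z : ℤ, a' p = (z : ℝ))).card ≤ k := by
      have hsub : E.filter (fun p => ¬ ∃ z : ℤ, a' p = (z : ℝ)) ⊆ F.erase pm := by
        intro p hp
        obtain ⟨hpE, hpfrac⟩ := Finset.mem_filter.1 hp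
        have hpF : p ∈ F := by
          by_contra hcon
          have : ∃ z : ℤ, a p = (z : ℝ) := by
            by_contra hcon2
            exact hcon (Finset.mem_filter.2 ⟨hpE, hcon2⟩)
          obtain ⟨z, hz⟩ := this
          exact hpfrac ⟨z, by rw [ha'F p hcon]; exact hz⟩
        refine Finset.mem_erase.2 ⟨?_, hpF⟩
        rintro rfl
        exact hpfrac hpmint
      have := Finset.card_le_card hsub
      have herase : (F.erase pm).card = F.card - 1 := Finset.card_erase_of_mem hpmF
      omega
    obtain ⟨A, hA1, hA2⟩ := IH a' h0' h1' hint' hcard'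
    exact ⟨A, hA1, fun m => (hA2 m).trans (hbal m)⟩

lemma coord_sum {n : ℕ} (s : Finset (Fin n × Fin n)) (c d : Fin n × Fin n → ℝ) (m : Fin n) :
    (∑ p ∈ s, (c p • (Pi.single p.1 (1:ℝ) : Fin n → ℝ)
      + d p • (Pi.single p.2 (1:ℝ) : Fin n → ℝ))) m
    = (∑ p ∈ s.filter (fun p => p.1 = m), c p) + (∑ p ∈ s.filter (fun p => p.2 = m), d p) := by
  classical
  rw [Finset.sum_apply, Finset.sum_filter, Finset.sum_filter, ← Finset.sum_add_distrib]
  refine Finset.sum_congr rfl fun p _ => ?_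
  simp [Pi.single_apply, eq_comm]

/-- Let `n ≥ 2` and `(ℓ_{ij})_{i<j}` be nonnegative integers, and let
`P_L ⊂ ℝ^n` be the Minkowski sum over all pairs `i < j` of the segments
`[ℓ_{ij}·e_i, ℓ_{ij}·e_j]`.  Then the set of integer points of `P_L` equals the set of
all vectors `Σ_{i<j} (a_{ij} e_i + b_{ij} e_j)` with `a_{ij}, b_{ij} ∈ ℤ_{≥0}` and
`a_{ij} + b_{ij} = ℓ_{ij}` for each pair `i < j`. -/
theorem link_zonotope_integer_points (n : ℕ) (hn : 2 ≤ n) (ℓ : Fin n × Fin n → ℕ) :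
    let pairs := Finset.univ.filter (fun p : Fin n × Fin n => p.1 < p.2)
    let PL : Set (Fin n → ℝ) :=
      ∑ p ∈ pairs,
        segment ℝ ((ℓ p : ℝ) • (Pi.single p.1 (1 : ℝ) : Fin n → ℝ))
          ((ℓ p : ℝ) • (Pi.single p.2 (1 : ℝ) : Fin n → ℝ))
    {x ∈ PL | ∃ z : Fin n → ℤ, x = fun m => ((z m : ℤ) : ℝ)} =
      {x : Fin n → ℝ | ∃ a b : Fin n × Fin n → ℕ,
        (∀ p ∈ pairs, a p + b p = ℓ p) ∧
        x = ∑ p ∈ pairs,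
          ((a p : ℝ) • (Pi.single p.1 (1 : ℝ) : Fin n → ℝ) +
            (b p : ℝ) • (Pi.single p.2 (1 : ℝ) : Fin n → ℝ))} := by
  classical
  intro pairs PL
  ext x
  simp only [Set.mem_setOf_eq, Set.mem_sep_iff]
  constructor
  · rintro ⟨hxPL, z, hz⟩
    rw [Set.mem_finset_sum] at hxPL
    obtain ⟨g, hg, hgs⟩ := hxPL
    have hseg : ∀ p : Fin n × Fin n, ∃ u v : ℝ, 0 ≤ u ∧ 0 ≤ v ∧
        (p ∈ pairs → (u + v = (ℓ p : ℝ)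
          ∧ g p = u • (Pi.single p.1 (1:ℝ) : Fin n → ℝ)
              + v • (Pi.single p.2 (1:ℝ) : Fin n → ℝ))) := by
      intro p
      by_cases hp : p ∈ pairs
      · obtain ⟨s, t, hs, ht, hst, heq⟩ := hg hp
        refine ⟨s * ℓ p, t * ℓ p, by positivity, by positivity, fun _ => ⟨?_, ?_⟩⟩
        · rw [← add_mul, hst, one_mul]
        · rw [← heq, smul_smul, smul_smul]
      · exact ⟨0, 0, le_refl 0, le_refl 0, fun h => absurd h hp⟩
    choose u v hu hv huv using hseg
    have hx : ∀ m, x m = (∑ p ∈ pairs.filter (fun p => p.1 = m), u p)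
        + ∑ p ∈ pairs.filter (fun p => p.2 = m), v p := by
      intro m
      have e : ∑ p ∈ pairs, g p
          = ∑ p ∈ pairs, (u p • (Pi.single p.1 (1:ℝ) : Fin n → ℝ)
            + v p • (Pi.single p.2 (1:ℝ) : Fin n → ℝ)) :=
        Finset.sum_congr rfl (fun p hp => (huv p hp).2)
      rw [← hgs, e, coord_sum]
    have hsum2 : ∀ m, ∑ p ∈ pairs.filter (fun p => p.2 = m), u p
        = (∑ p ∈ pairs.filter (fun p => p.2 = m), (ℓ p : ℝ))
          - ∑ p ∈ pairs.filter (fun p => p.2 = m), v p := by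
      intro m
      rw [← Finset.sum_sub_distrib]
      refine Finset.sum_congr rfl fun p hp => ?_
      have := (huv p (Finset.filter_subset _ _ hp)).1
      linarith
    have hint : ∀ m : Fin n, ∃ zz : ℤ,
        (∑ p ∈ pairs.filter (fun p => p.1 = m), u p)
          - (∑ p ∈ pairs.filter (fun p => p.2 = m), u p) = (zz : ℝ) := by
      intro m
      refine ⟨z m - (∑ p ∈ pairs.filter (fun p => p.2 = m), (ℓ p : ℤ)), ?_⟩
      have hxm : x m = (z m : ℝ) := congrFun hz m
      have h1 := hx m
      rw [hxm] at h1
      rw [hsum2 m]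
      push_cast
      linarith
    obtain ⟨A, hA1, hA2⟩ := exists_nat_solution pairs ℓ pairs.card u
      (fun p _ => hu p)
      (fun p hp => by have h1 := (huv p hp).1; have h2 := hv p; linarith)
      hint (Finset.card_le_card (Finset.filter_subset _ _))
    refine ⟨A, fun p => ℓ p - A p, fun p hp => Nat.add_sub_cancel' (hA1 p hp), ?_⟩
    funext m
    rw [coord_sum]
    have hc : ∑ p ∈ pairs.filter (fun p => p.2 = m), (((ℓ p - A p : ℕ)) : ℝ)
        = (∑ p ∈ pairs.filter (fun p => p.2 = m), (ℓ p : ℝ))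
          - ∑ p ∈ pairs.filter (fun p => p.2 = m), ((A p : ℕ) : ℝ) := by
      rw [← Finset.sum_sub_distrib]
      refine Finset.sum_congr rfl fun p hp => ?_
      have := hA1 p (Finset.filter_subset _ _ hp)
      push_cast [Nat.cast_sub this]
      ring
    rw [hc]
    have hbalA := hA2 m
    have h1 := hx m
    have h2 := hsum2 m
    linarith
  · rintro ⟨a, b, hab, hxeq⟩
    constructor
    · rw [Set.mem_finset_sum]
      refine ⟨fun p => (a p : ℝ) • (Pi.single p.1 (1:ℝ) : Fin n → ℝ)
        + (b p : ℝ) • (Pi.single p.2 (1:ℝ) : Fin n → ℝ), fun {p} hp => ?_, hxeq.symm⟩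
      by_cases hl : ℓ p = 0
      · have hab0 : a p = 0 ∧ b p = 0 := by have := hab p hp; omega
        refine ⟨1, 0, zero_le_one, le_refl 0, by ring, ?_⟩
        simp [hl, hab0.1, hab0.2]
      · have hlpos : (0:ℝ) < (ℓ p : ℝ) := by
          exact_mod_cast Nat.pos_of_ne_zero hl
        refine ⟨(a p : ℝ)/(ℓ p : ℝ), (b p : ℝ)/(ℓ p : ℝ), by positivity, by positivity, ?_, ?_⟩
        · have habp : (a p : ℝ) + (b p : ℝ) = (ℓ p : ℝ) := by exact_mod_cast hab p hp
          rw [← add_div, habp, div_self (ne_of_gt hlpos)]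
        · rw [smul_smul, smul_smul, div_mul_cancel₀ _ (ne_of_gt hlpos),
            div_mul_cancel₀ _ (ne_of_gt hlpos)]
    · refine ⟨fun m => (∑ p ∈ pairs.filter (fun p => p.1 = m), (a p : ℤ))
        + ∑ p ∈ pairs.filter (fun p => p.2 = m), (b p : ℤ), ?_⟩
      rw [hxeq]
      funext m
      rw [coord_sum]
      push_cast
      ring
end

section
/- For nonnegative integers ℓ_{12}, ℓ_{13}, ℓ_{23}, the Minkowski sum [ℓ_{12}e_1, ℓ_{12}e_2] + [ℓ_{13}e_1, ℓ_{13}e_3] + [ℓ_{23}e_2, ℓ_{23}e_3] of three segments in ℝ^3 equals the convex hull of the six points (0, ℓ_{12}, ℓ_{13}+ℓ_{23}), (ℓ_{12}, 0, ℓ_{13}+ℓ_{23}), (ℓ_{12}+ℓ_{13}, 0, ℓ_{23}), (ℓ_{12}+ℓ_{13}, ℓ_{23}, 0), (ℓ_{13}, ℓ_{12}+ℓ_{23}, 0), (0, ℓ_{12}+ℓ_{23}, ℓ_{13}). -/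
open Pointwise

lemma pair_add_pair {V : Type*} [AddCommGroup V] (p q r t : V) :
    ({p, q} : Set V) + {r, t} = {p + r, p + t, q + r, q + t} := by
  ext x
  simp only [Set.mem_add, Set.mem_insert_iff, Set.mem_singleton_iff]
  constructor
  · rintro ⟨a, (rfl | rfl), b, (rfl | rfl), rfl⟩ <;> tauto
  · rintro (rfl | rfl | rfl | rfl)
    · exact ⟨p, Or.inl rfl, r, Or.inl rfl, rfl⟩
    · exact ⟨p, Or.inl rfl, t, Or.inr rfl, rfl⟩
    · exact ⟨q, Or.inr rfl, r, Or.inl rfl, rfl⟩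
    · exact ⟨q, Or.inr rfl, t, Or.inr rfl, rfl⟩

lemma tri_mem_convexHull {s : Set (Fin 3 → ℝ)} {u v w x : Fin 3 → ℝ}
    (hu : u ∈ s) (hv : v ∈ s) (hw : w ∈ s)
    {α β γ : ℝ} (hα : 0 ≤ α) (hβ : 0 ≤ β) (hγ : 0 ≤ γ) (hpos : 0 < α + β + γ)
    (hx : (α + β + γ) • x = α • u + β • v + γ • w) : x ∈ convexHull ℝ s := by
  have := Finset.centerMass_mem_convexHull (s := s) (Finset.univ : Finset (Fin 3))
    (w := ![α, β, γ]) (z := ![u, v, w])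
    (by intro i _; fin_cases i <;> assumption)
    (by rw [Fin.sum_univ_three]; simpa using hpos)
    (by intro i _; fin_cases i <;> assumption)
  have hcm : (Finset.univ : Finset (Fin 3)).centerMass ![α, β, γ] ![u, v, w] = x := by
    rw [Finset.centerMass, Fin.sum_univ_three, Fin.sum_univ_three]
    simp only [Matrix.cons_val_zero, Matrix.cons_val_one, Matrix.head_cons,
      Matrix.cons_val_two, Matrix.tail_cons]
    rw [← hx, smul_smul, inv_mul_cancel₀ (ne_of_gt hpos), one_smul]
  rwa [hcm] at this

lemma quad_add_pair {V : Type*} [AddCommGroup V] (p q r s t u : V) :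
    ({p, q, r, s} : Set V) + {t, u} =
      {p + t, p + u, q + t, q + u, r + t, r + u, s + t, s + u} := by
  ext x
  simp only [Set.mem_add, Set.mem_insert_iff, Set.mem_singleton_iff]
  constructor
  · rintro ⟨a, (rfl | rfl | rfl | rfl), b, (rfl | rfl), rfl⟩ <;> tauto
  · rintro (rfl | rfl | rfl | rfl | rfl | rfl | rfl | rfl)
    · exact ⟨p, by tauto, t, by tauto, rfl⟩
    · exact ⟨p, by tauto, u, by tauto, rfl⟩
    · exact ⟨q, by tauto, t, by tauto, rfl⟩
    · exact ⟨q, by tauto, u, by tauto, rfl⟩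
    · exact ⟨r, by tauto, t, by tauto, rfl⟩
    · exact ⟨r, by tauto, u, by tauto, rfl⟩
    · exact ⟨s, by tauto, t, by tauto, rfl⟩
    · exact ⟨s, by tauto, u, by tauto, rfl⟩

/-- For nonnegative integers `ℓ_{12}, ℓ_{13}, ℓ_{23}`, the Minkowski sum
`[ℓ_{12}e_1, ℓ_{12}e_2] + [ℓ_{13}e_1, ℓ_{13}e_3] + [ℓ_{23}e_2, ℓ_{23}e_3]` of three
segments in `ℝ^3` equals the convex hull of the six listed points. -/
theorem hexagon_zonotope (l12 l13 l23 : ℕ) :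
    segment ℝ ((l12 : ℝ) • (![1, 0, 0] : Fin 3 → ℝ)) ((l12 : ℝ) • (![0, 1, 0] : Fin 3 → ℝ)) +
      segment ℝ ((l13 : ℝ) • (![1, 0, 0] : Fin 3 → ℝ)) ((l13 : ℝ) • (![0, 0, 1] : Fin 3 → ℝ)) +
      segment ℝ ((l23 : ℝ) • (![0, 1, 0] : Fin 3 → ℝ)) ((l23 : ℝ) • (![0, 0, 1] : Fin 3 → ℝ)) =
    convexHull ℝ
      ({![0, (l12 : ℝ), (l13 : ℝ) + l23],
        ![(l12 : ℝ), 0, (l13 : ℝ) + l23],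
        ![(l12 : ℝ) + l13, 0, (l23 : ℝ)],
        ![(l12 : ℝ) + l13, (l23 : ℝ), 0],
        ![(l13 : ℝ), (l12 : ℝ) + l23, 0],
        ![0, (l12 : ℝ) + l23, (l13 : ℝ)]} : Set (Fin 3 → ℝ)) := by
  set a : ℝ := (l12 : ℝ) with ha
  set b : ℝ := (l13 : ℝ) with hb
  set c : ℝ := (l23 : ℝ) with hc
  have ha0 : 0 ≤ a := Nat.cast_nonneg _
  have hb0 : 0 ≤ b := Nat.cast_nonneg _
  have hc0 : 0 ≤ c := Nat.cast_nonneg _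
  -- the eight sums of endpoints
  have hsmul : ∀ (r x y z : ℝ), r • (![x, y, z] : Fin 3 → ℝ) = ![r * x, r * y, r * z] := by
    intro r x y z; funext i; fin_cases i <;> simp
  have hadd : ∀ (x y z x' y' z' : ℝ),
      (![x, y, z] : Fin 3 → ℝ) + ![x', y', z'] = ![x + x', y + y', z + z'] := by
    intro x y z x' y' z'; funext i; fin_cases i <;> simp
  rw [← convexHull_pair, ← convexHull_pair, ← convexHull_pair, ← convexHull_add,
    ← convexHull_add, pair_add_pair, quad_add_pair]
  have hS8 : ({a • ![1, 0, 0] + b • ![1, 0, 0] + c • ![0, 1, 0],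
      a • ![1, 0, 0] + b • ![1, 0, 0] + c • ![0, 0, 1],
      a • ![1, 0, 0] + b • ![0, 0, 1] + c • ![0, 1, 0],
      a • ![1, 0, 0] + b • ![0, 0, 1] + c • ![0, 0, 1],
      a • ![0, 1, 0] + b • ![1, 0, 0] + c • ![0, 1, 0],
      a • ![0, 1, 0] + b • ![1, 0, 0] + c • ![0, 0, 1],
      a • ![0, 1, 0] + b • ![0, 0, 1] + c • ![0, 1, 0],
      a • ![0, 1, 0] + b • ![0, 0, 1] + c • ![0, 0, 1]} : Set (Fin 3 → ℝ)) =
      {![a + b, c, 0], ![a + b, 0, c], ![a, c, b], ![a, 0, b + c],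
       ![b, a + c, 0], ![b, a, c], ![0, a + c, b], ![0, a, b + c]} := by
    simp only [hsmul, hadd]
    norm_num
  rw [hS8]
  set v1 : Fin 3 → ℝ := ![0, a, b + c]
  set v2 : Fin 3 → ℝ := ![a, 0, b + c]
  set v3 : Fin 3 → ℝ := ![a + b, 0, c]
  set v4 : Fin 3 → ℝ := ![a + b, c, 0]
  set v5 : Fin 3 → ℝ := ![b, a + c, 0]
  set v6 : Fin 3 → ℝ := ![0, a + c, b]
  have hv1 : v1 ∈ ({v1, v2, v3, v4, v5, v6} : Set (Fin 3 → ℝ)) := by simp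
  have hv2 : v2 ∈ ({v1, v2, v3, v4, v5, v6} : Set (Fin 3 → ℝ)) := by right; simp
  have hv3 : v3 ∈ ({v1, v2, v3, v4, v5, v6} : Set (Fin 3 → ℝ)) := by right; right; simp
  have hv4 : v4 ∈ ({v1, v2, v3, v4, v5, v6} : Set (Fin 3 → ℝ)) := by
    right; right; right; simp
  have hv5 : v5 ∈ ({v1, v2, v3, v4, v5, v6} : Set (Fin 3 → ℝ)) := by
    right; right; right; right; simp
  have hv6 : v6 ∈ ({v1, v2, v3, v4, v5, v6} : Set (Fin 3 → ℝ)) := by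
    right; right; right; right; right; simp
  -- membership of the first interior point (a, c, b)
  have hp : (![a, c, b] : Fin 3 → ℝ) ∈ convexHull ℝ ({v1, v2, v3, v4, v5, v6} : Set (Fin 3 → ℝ)) := by
    rcases eq_or_lt_of_le ha0 with h | h
    · apply subset_convexHull
      have : (![a, c, b] : Fin 3 → ℝ) = v6 := by
        funext i; fin_cases i <;> simp [v6, ← h]
      rw [this]; exact hv6
    rcases eq_or_lt_of_le hb0 with h' | h'
    · apply subset_convexHull
      have : (![a, c, b] : Fin 3 → ℝ) = v4 := by
        funext i; fin_cases i <;> simp [v4, ← h']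
      rw [this]; exact hv4
    rcases eq_or_lt_of_le hc0 with h'' | h''
    · apply subset_convexHull
      have : (![a, c, b] : Fin 3 → ℝ) = v2 := by
        funext i; fin_cases i <;> simp [v2, ← h'']
      rw [this]; exact hv2
    · refine tri_mem_convexHull hv2 hv4 hv6 (α := a * b) (β := a * c) (γ := b * c)
        (by positivity) (by positivity) (by positivity) (by positivity) ?_
      funext i
      fin_cases i <;> simp [v2, v4, v6] <;> ring
  -- membership of the second interior point (b, a, c)
  have hq : (![b, a, c] : Fin 3 → ℝ) ∈ convexHull ℝ ({v1, v2, v3, v4, v5, v6} : Set (Fin 3 → ℝ)) := by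
    rcases eq_or_lt_of_le ha0 with h | h
    · apply subset_convexHull
      have : (![b, a, c] : Fin 3 → ℝ) = v3 := by
        funext i; fin_cases i <;> simp [v3, ← h]
      rw [this]; exact hv3
    rcases eq_or_lt_of_le hb0 with h' | h'
    · apply subset_convexHull
      have : (![b, a, c] : Fin 3 → ℝ) = v1 := by
        funext i; fin_cases i <;> simp [v1, ← h']
      rw [this]; exact hv1
    rcases eq_or_lt_of_le hc0 with h'' | h''
    · apply subset_convexHull
      have : (![b, a, c] : Fin 3 → ℝ) = v5 := by
        funext i; fin_cases i <;> simp [v5, ← h'']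
      rw [this]; exact hv5
    · refine tri_mem_convexHull hv1 hv3 hv5 (α := a * c) (β := b * c) (γ := a * b)
        (by positivity) (by positivity) (by positivity) (by positivity) ?_
      funext i
      fin_cases i <;> simp [v1, v3, v5] <;> ring
  apply Set.Subset.antisymm
  · apply convexHull_min _ (convex_convexHull ℝ _)
    rintro x (rfl | rfl | rfl | rfl | rfl | rfl | rfl | rfl)
    · exact subset_convexHull ℝ _ hv4
    · exact subset_convexHull ℝ _ hv3
    · exact hp
    · exact subset_convexHull ℝ _ hv2
    · exact subset_convexHull ℝ _ hv5
    · exact hq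
    · exact subset_convexHull ℝ _ hv6
    · exact subset_convexHull ℝ _ hv1
  · apply convexHull_mono
    intro x hx
    simp only [Set.mem_insert_iff, Set.mem_singleton_iff] at hx ⊢
    tauto
end

section
/- Let R be a commutative ring, n ≥ 1, u_1,…,u_n, v_1,…,v_n ∈ R, and let (a_1,b_1),…,(a_n,b_n) be pairs of nonnegative integers. Let e_k(u) = Σ_{i_1<…<i_k} u_{i_1}⋯u_{i_k} be the k-th elementary symmetric polynomial in u_1,…,u_n. Then for every 0 ≤ k ≤ n: e_k(u) · det( (u_i^{a_j} v_i^{b_j})_{i,j} ) = Σ_T det( (u_i^{a_j + χ_T(j)} v_i^{b_j})_{i,j} ), where the sum runs over all k-element subsets T ⊆ {1,…,n} and χ_T(j) = 1 if j ∈ T and 0 otherwise. -/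
open Polynomial Matrix Finset

/-- Key polynomial identity: `∏ (X + C uᵢ) · C(det M) = ∑_s X^(n-|s|) · C(det M_s)`. -/
theorem pieri_poly {R : Type*} [CommRing R] (n : ℕ)
    (u v : Fin n → R) (a b : Fin n → ℕ) :
    (∏ i : Fin n, (X + C (u i))) *
        C (Matrix.det (Matrix.of fun i j : Fin n => u i ^ a j * v i ^ b j)) =
      ∑ s : Finset (Fin n), X ^ (n - s.card) *
        C (Matrix.det (Matrix.of fun i j : Fin n =>
          u i ^ (a j + if j ∈ s then 1 else 0) * v i ^ b j)) := by
  set M : Matrix (Fin n) (Fin n) R := Matrix.of fun i j => u i ^ a j * v i ^ b j with hM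
  have step1 :
      (∏ i : Fin n, (X + C (u i))) * C M.det =
        Matrix.det (Matrix.of fun i j : Fin n => (X + C (u i)) * C (M i j)) := by
    have : (Matrix.of fun i j : Fin n => (X + C (u i)) * C (M i j)) =
        Matrix.diagonal (fun i => X + C (u i)) * M.map C := by
      ext i j
      simp [Matrix.diagonal_mul, Matrix.map_apply]
    rw [this, Matrix.det_mul, Matrix.det_diagonal]
    congr 1
    exact RingHom.map_det C M
  rw [step1]
  -- expand determinant multilinearly over columns (rows of the transpose)
  rw [← Matrix.det_transpose]
  have step2 :
      Matrix.det (Matrix.of fun i j : Fin n => (X + C (u i)) * C (M i j))ᵀ =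
        ∑ s : Finset (Fin n),
          Matrix.det (Matrix.of fun j i : Fin n =>
            if j ∈ s then C (u i) * C (M i j) else X * C (M i j)) := by
    have h := (Matrix.detRowAlternating (R := R[X]) (n := Fin n)).toMultilinearMap.map_add_univ
      (fun j : Fin n => fun i : Fin n => C (u i) * C (M i j))
      (fun j : Fin n => fun i : Fin n => X * C (M i j))
    have hL : (Matrix.of fun i j : Fin n => (X + C (u i)) * C (M i j))ᵀ =
        ((fun j : Fin n => fun i : Fin n => C (u i) * C (M i j)) +
          fun j : Fin n => fun i : Fin n => X * C (M i j)) := by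
      funext j i
      show (X + C (u i)) * C (M i j) = C (u i) * C (M i j) + X * C (M i j)
      ring
    have e1 : (Matrix.of fun i j : Fin n => (X + C (u i)) * C (M i j))ᵀ.det =
        (Matrix.detRowAlternating (R := R[X]) (n := Fin n)).toMultilinearMap
          ((fun j : Fin n => fun i : Fin n => C (u i) * C (M i j)) +
            fun j : Fin n => fun i : Fin n => X * C (M i j)) := by
      rw [hL]; rfl
    rw [e1, h]
    refine Finset.sum_congr rfl fun s _ => ?_
    show Matrix.det _ = _
    congr 1
    funext j i
    by_cases hjs : j ∈ s <;> simp [Finset.piecewise, hjs, Matrix.of_apply]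
  rw [step2]
  refine Finset.sum_congr rfl fun s _ => ?_
  have entry : ∀ j i : Fin n,
      (if j ∈ s then C (u i) * C (M i j) else X * C (M i j)) =
        ((if j ∈ s then (1 : R[X]) else X) *
          C (u i ^ (a j + if j ∈ s then 1 else 0) * v i ^ b j)) := by
    intro j i
    by_cases hjs : j ∈ s <;> simp [hjs, hM, ← C_mul, pow_succ] <;> ring
  have : Matrix.det (Matrix.of fun j i : Fin n =>
      if j ∈ s then C (u i) * C (M i j) else X * C (M i j)) =
      (∏ j : Fin n, if j ∈ s then (1 : R[X]) else X) *
        Matrix.det (Matrix.of fun j i : Fin n =>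
          C (u i ^ (a j + if j ∈ s then 1 else 0) * v i ^ b j)) := by
    rw [← Matrix.det_mul_column]
    congr 1
    exact Matrix.ext fun j i => entry j i
  rw [this]
  have hprod : (∏ j : Fin n, if j ∈ s then (1 : R[X]) else X) = X ^ (n - s.card) := by
    rw [← Finset.prod_filter_mul_prod_filter_not Finset.univ (· ∈ s)]
    have h1 : Finset.filter (· ∈ s) Finset.univ = s := by simp
    have h2 : Finset.filter (fun j => ¬ j ∈ s) Finset.univ = sᶜ := by ext x; simp
    rw [h1, h2]
    rw [Finset.prod_congr rfl (fun x hx => if_pos hx), Finset.prod_const_one, one_mul]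
    rw [Finset.prod_congr rfl (fun x hx => if_neg (Finset.mem_compl.mp hx)),
      Finset.prod_const, Finset.card_compl, Fintype.card_fin]
  have hdetC : Matrix.det (Matrix.of fun j i : Fin n =>
      C (u i ^ (a j + if j ∈ s then 1 else 0) * v i ^ b j)) =
      C (Matrix.det (Matrix.of fun i j : Fin n =>
        u i ^ (a j + if j ∈ s then 1 else 0) * v i ^ b j)) := by
    rw [← Matrix.det_transpose (Matrix.of fun i j : Fin n =>
        u i ^ (a j + if j ∈ s then 1 else 0) * v i ^ b j), RingHom.map_det]
    rfl
  rw [hprod, hdetC]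

/-- **Pieri rule for the determinants `Δ_S`.**  For a commutative ring `R`,
elements `u_1,…,u_n, v_1,…,v_n`, exponent pairs `(a_j, b_j)` and `0 ≤ k ≤ n`:
`e_k(u) · det(u_i^{a_j} v_i^{b_j}) = Σ_{|T| = k} det(u_i^{a_j + χ_T(j)} v_i^{b_j})`,
where `e_k` is the `k`-th elementary symmetric polynomial and the sum runs over all
`k`-element subsets `T` of the column indices. -/
theorem pieri_rule_det {R : Type*} [CommRing R] (n : ℕ) (hn : 1 ≤ n)
    (u v : Fin n → R) (a b : Fin n → ℕ) (k : ℕ) (hk : k ≤ n) :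
    (∑ T ∈ Finset.powersetCard k (Finset.univ : Finset (Fin n)), ∏ i ∈ T, u i) *
        Matrix.det (Matrix.of fun i j : Fin n => u i ^ a j * v i ^ b j) =
      ∑ T ∈ Finset.powersetCard k (Finset.univ : Finset (Fin n)),
        Matrix.det (Matrix.of fun i j : Fin n =>
          u i ^ (a j + if j ∈ T then 1 else 0) * v i ^ b j) := by
  have key := congrArg (fun p : Polynomial R => p.coeff (n - k)) (pieri_poly n u v a b)
  rw [coeff_mul_C] at key
  have hcard : #(Finset.univ : Finset (Fin n)) = n := by simp
  have hnk : n - k ≤ #(Finset.univ : Finset (Fin n)) := by omega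
  rw [Finset.prod_X_add_C_coeff Finset.univ u hnk] at key
  rw [hcard] at key
  have hk' : n - (n - k) = k := by omega
  rw [hk'] at key
  rw [key]
  rw [Polynomial.finset_sum_coeff]
  have : ∀ s : Finset (Fin n),
      (X ^ (n - s.card) * C (Matrix.det (Matrix.of fun i j : Fin n =>
        u i ^ (a j + if j ∈ s then 1 else 0) * v i ^ b j))).coeff (n - k) =
      if s.card = k then Matrix.det (Matrix.of fun i j : Fin n =>
        u i ^ (a j + if j ∈ s then 1 else 0) * v i ^ b j) else 0 := by
    intro s
    rw [mul_comm, coeff_C_mul, coeff_X_pow]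
    have hsc : s.card ≤ n := by simpa using Finset.card_le_card (Finset.subset_univ s)
    by_cases h : s.card = k
    · simp [h]
    · have : ¬ (n - k = n - s.card) := by omega
      simp [this, h]
  rw [Finset.sum_congr rfl (fun s _ => this s)]
  rw [← Finset.sum_filter]
  congr 1
  rw [Finset.powersetCard_eq_filter, Finset.powerset_univ]
end

section
/- Let n ≥ 2 and let R_UV be the quotient of (ℤ/2ℤ)[U_1,…,U_n,V_1,…,V_n] by the ideal generated by U_iV_i − U_jV_j for all i, j. For 0 ≤ j ≤ n−1, let D_j ∈ R_UV be the determinant of the n×n matrix whose i-th row is (U_i^j, …, U_i, 1, V_i, …, V_i^{n−1−j}). Then for every 1 ≤ k ≤ n−1 and every subset I ⊆ {1,…,n} with |I| = k, the relation (Π_{i∈I} U_i) · D_{k−1} = (Π_{j∉I} V_j) · D_k holds in R_UV. -/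
open MvPolynomial

/-- In `R_UV = (ℤ/2)[U_1,…,U_n,V_1,…,V_n]/(U_iV_i − U_jV_j)`, the
determinants `D_j` (whose `i`-th row is `(U_i^j, …, U_i, 1, V_i, …, V_i^{n−1−j})`)
satisfy, for every `1 ≤ k ≤ n−1` and every `k`-element subset `I ⊆ {1,…,n}`:
`(Π_{i∈I} U_i) · D_{k−1} = (Π_{j∉I} V_j) · D_k`. -/
theorem torus_link_relations_for_minors (n : ℕ) (hn : 2 ≤ n) :
    let I0 : Ideal (MvPolynomial (Fin n ⊕ Fin n) (ZMod 2)) := Ideal.span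
      {f | ∃ i j : Fin n,
        f = X (Sum.inl i) * X (Sum.inr i) - X (Sum.inl j) * X (Sum.inr j)}
    let U : Fin n → MvPolynomial (Fin n ⊕ Fin n) (ZMod 2) ⧸ I0 :=
      fun i => Ideal.Quotient.mk I0 (X (Sum.inl i))
    let V : Fin n → MvPolynomial (Fin n ⊕ Fin n) (ZMod 2) ⧸ I0 :=
      fun i => Ideal.Quotient.mk I0 (X (Sum.inr i))
    let D : ℕ → MvPolynomial (Fin n ⊕ Fin n) (ZMod 2) ⧸ I0 := fun j =>
      Matrix.det (Matrix.of fun i l : Fin n =>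
        if (l : ℕ) ≤ j then U i ^ (j - (l : ℕ)) else V i ^ ((l : ℕ) - j))
    ∀ k : ℕ, 1 ≤ k → k ≤ n - 1 → ∀ I : Finset (Fin n), I.card = k →
      (∏ i ∈ I, U i) * D (k - 1) = (∏ j ∈ Iᶜ, V j) * D k := by
  intro I0 U V D k hk1 hk2 I hI
  have hn0 : 0 < n := by omega
  have hkn : k ≤ n := by omega
  set z : Fin n := ⟨0, hn0⟩ with hz
  set q := U z * V z with hq
  -- all U i * V i are equal in the quotient
  have huv : ∀ i : Fin n, U i * V i = q := by
    intro i
    have h : (Ideal.Quotient.mk I0) (X (Sum.inl i) * X (Sum.inr i)) =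
        (Ideal.Quotient.mk I0) (X (Sum.inl z) * X (Sum.inr z)) :=
      Ideal.Quotient.eq.mpr (Ideal.subset_span ⟨i, z, rfl⟩)
    rw [map_mul, map_mul] at h
    exact h
  -- the common "core" matrix entries
  set C : Fin n → Fin n → (MvPolynomial (Fin n ⊕ Fin n) (ZMod 2) ⧸ I0) := fun i l =>
    if (l : ℕ) < k then
      (if i ∈ I then U i ^ (k - (l : ℕ)) else U i ^ (k - 1 - (l : ℕ)))
    else
      (if i ∈ I then V i ^ ((l : ℕ) - k) else V i ^ ((l : ℕ) - k + 1)) with hC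
  -- row-scaled versions of the two matrices
  have hA : ∀ i l : Fin n,
      (if i ∈ I then U i else 1) *
        (if (l : ℕ) ≤ k - 1 then U i ^ (k - 1 - (l : ℕ)) else V i ^ ((l : ℕ) - (k - 1)))
      = (if i ∈ I ∧ k ≤ (l : ℕ) then q else 1) * C i l := by
    intro i l
    simp only [hC]
    by_cases hi : i ∈ I <;> by_cases hl : (l : ℕ) < k
    · have c1 : (l : ℕ) ≤ k - 1 := by omega
      have c2 : ¬ k ≤ (l : ℕ) := by omega
      simp only [hi, hl, c1, c2, if_true, if_false, ite_true, ite_false, true_and,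
        and_false, one_mul]
      rw [(show k - (l : ℕ) = (k - 1 - (l : ℕ)) + 1 by omega), pow_succ]
      ring
    · have c1 : ¬ ((l : ℕ) ≤ k - 1) := by omega
      have c2 : k ≤ (l : ℕ) := by omega
      simp only [hi, hl, c1, c2, if_true, if_false, ite_true, ite_false, true_and, and_true]
      rw [(show (l : ℕ) - (k - 1) = ((l : ℕ) - k) + 1 by omega), pow_succ]
      calc U i * (V i ^ ((l : ℕ) - k) * V i) = (U i * V i) * V i ^ ((l : ℕ) - k) := by ring
        _ = q * V i ^ ((l : ℕ) - k) := by rw [huv]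
    · have c1 : (l : ℕ) ≤ k - 1 := by omega
      simp only [hi, hl, c1, if_true, if_false, ite_true, ite_false, false_and, one_mul]
    · have c1 : ¬ ((l : ℕ) ≤ k - 1) := by omega
      simp only [hi, hl, c1, if_true, if_false, ite_true, ite_false, false_and, one_mul]
      rw [(show (l : ℕ) - (k - 1) = (l : ℕ) - k + 1 by omega)]
  have hB : ∀ i l : Fin n,
      (if i ∉ I then V i else 1) *
        (if (l : ℕ) ≤ k then U i ^ (k - (l : ℕ)) else V i ^ ((l : ℕ) - k))
      = (if i ∉ I ∧ (l : ℕ) < k then q else 1) * C i l := by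
    intro i l
    simp only [hC]
    by_cases hi : i ∈ I <;> by_cases hl : (l : ℕ) < k
    · have c1 : (l : ℕ) ≤ k := by omega
      simp only [hi, hl, c1, not_true_eq_false, if_true, if_false, ite_true, ite_false,
        false_and, one_mul]
    · by_cases hlk : (l : ℕ) = k
      · have c1 : (l : ℕ) ≤ k := by omega
        simp only [hi, hl, c1, not_true_eq_false, if_true, if_false, ite_true, ite_false,
          false_and, one_mul]
        rw [(show k - (l : ℕ) = 0 by omega), (show (l : ℕ) - k = 0 by omega), pow_zero,
          pow_zero]
      · have c1 : ¬ ((l : ℕ) ≤ k) := by omega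
        simp only [hi, hl, c1, not_true_eq_false, if_true, if_false, ite_true, ite_false,
          false_and, one_mul]
    · have c1 : (l : ℕ) ≤ k := by omega
      simp only [hi, hl, c1, not_false_eq_true, if_true, if_false, ite_true, ite_false,
        true_and, and_true]
      rw [(show k - (l : ℕ) = (k - 1 - (l : ℕ)) + 1 by omega), pow_succ]
      calc V i * (U i ^ (k - 1 - (l : ℕ)) * U i) = (U i * V i) * U i ^ (k - 1 - (l : ℕ)) := by
            ring
        _ = q * U i ^ (k - 1 - (l : ℕ)) := by rw [huv]
    · by_cases hlk : (l : ℕ) = k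
      · have c1 : (l : ℕ) ≤ k := by omega
        simp only [hi, hl, c1, not_false_eq_true, if_true, if_false, ite_true, ite_false,
          true_and, and_false, one_mul]
        rw [(show k - (l : ℕ) = 0 by omega), (show (l : ℕ) - k = 0 by omega), pow_zero,
          zero_add, pow_one, mul_one]
      · have c1 : ¬ ((l : ℕ) ≤ k) := by omega
        simp only [hi, hl, c1, not_false_eq_true, if_true, if_false, ite_true, ite_false,
          true_and, and_false, one_mul]
        rw [pow_succ]
        ring
  -- rewrite both sides as determinants of row-scaled matrices
  have hL : (∏ i ∈ I, U i) * D (k - 1) =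
      Matrix.det (Matrix.of fun i l : Fin n =>
        (if i ∈ I ∧ k ≤ (l : ℕ) then q else 1) * C i l) := by
    have h := Matrix.det_mul_column (fun i => if i ∈ I then U i else 1)
      (Matrix.of fun i l : Fin n =>
        if (l : ℕ) ≤ k - 1 then U i ^ (k - 1 - (l : ℕ)) else V i ^ ((l : ℕ) - (k - 1)))
    rw [show (∏ i, if i ∈ I then U i else 1) = ∏ i ∈ I, U i by
        rw [Finset.prod_ite_mem, Finset.univ_inter]] at h
    have hD : D (k - 1) = Matrix.det (Matrix.of fun i l : Fin n =>
        if (l : ℕ) ≤ k - 1 then U i ^ (k - 1 - (l : ℕ)) else V i ^ ((l : ℕ) - (k - 1))) := rfl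
    rw [hD, ← h]
    congr 1
    ext i l
    simp only [Matrix.of_apply]
    exact hA i l
  have hRhs : (∏ j ∈ Iᶜ, V j) * D k =
      Matrix.det (Matrix.of fun i l : Fin n =>
        (if i ∉ I ∧ (l : ℕ) < k then q else 1) * C i l) := by
    have h := Matrix.det_mul_column (fun i => if i ∉ I then V i else 1)
      (Matrix.of fun i l : Fin n =>
        if (l : ℕ) ≤ k then U i ^ (k - (l : ℕ)) else V i ^ ((l : ℕ) - k))
    rw [show (∏ i, if i ∉ I then V i else 1) = ∏ j ∈ Iᶜ, V j by
        rw [← Finset.univ_inter Iᶜ, ← Finset.prod_ite_mem]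
        simp] at h
    have hD : D k = Matrix.det (Matrix.of fun i l : Fin n =>
        if (l : ℕ) ≤ k then U i ^ (k - (l : ℕ)) else V i ^ ((l : ℕ) - k)) := rfl
    rw [hD, ← h]
    congr 1
    ext i l
    simp only [Matrix.of_apply]
    exact hB i l
  rw [hL, hRhs]
  -- now compare determinants permutation by permutation
  rw [Matrix.det_apply, Matrix.det_apply]
  refine Finset.sum_congr rfl fun σ _ => ?_
  congr 1
  simp only [Matrix.of_apply]
  rw [Finset.prod_mul_distrib, Finset.prod_mul_distrib]
  congr 1
  -- products of the `q`-factors agree: a counting argument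
  rw [← Finset.prod_filter (fun l : Fin n => σ l ∈ I ∧ k ≤ (l : ℕ)) (fun _ => q),
    ← Finset.prod_filter (fun l : Fin n => σ l ∉ I ∧ (l : ℕ) < k) (fun _ => q),
    Finset.prod_const, Finset.prod_const]
  congr 1
  set S : Finset (Fin n) := Finset.univ.filter (fun l => σ l ∈ I) with hS
  set T : Finset (Fin n) := Finset.univ.filter (fun l => (l : ℕ) < k) with hT
  have hcardS : S.card = k := by
    rw [← hI]
    have himg : Finset.image σ S = I := by
      ext j
      simp only [Finset.mem_image, hS, Finset.mem_filter, Finset.mem_univ, true_and]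
      constructor
      · rintro ⟨l, hl, rfl⟩; exact hl
      · intro hj; exact ⟨σ.symm j, by simp [hj], by simp⟩
    rw [← himg, Finset.card_image_of_injective _ σ.injective]
  have hcardT : T.card = k := by
    have hTm : T = Finset.map (Fin.castLEEmb hkn) Finset.univ := by
      ext l
      simp only [hT, Finset.mem_filter, Finset.mem_univ, true_and, Finset.mem_map]
      constructor
      · intro hl
        exact ⟨⟨(l : ℕ), hl⟩, by simp [Fin.castLEEmb, Fin.ext_iff]⟩
      · rintro ⟨m, -, rfl⟩
        simp [Fin.castLEEmb]
    rw [hTm, Finset.card_map, Finset.card_univ, Fintype.card_fin]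
  have h1 : Finset.univ.filter (fun l : Fin n => σ l ∈ I ∧ k ≤ (l : ℕ)) = S \ T := by
    ext l
    simp only [hS, hT, Finset.mem_filter, Finset.mem_univ, true_and, Finset.mem_sdiff,
      not_lt]
  have h2 : Finset.univ.filter (fun l : Fin n => σ l ∉ I ∧ (l : ℕ) < k) = T \ S := by
    ext l
    simp only [hS, hT, Finset.mem_filter, Finset.mem_univ, true_and, Finset.mem_sdiff]
    tauto
  rw [h1, h2]
  have e1 := Finset.card_sdiff_add_card_inter S T
  have e2 := Finset.card_sdiff_add_card_inter T S
  rw [Finset.inter_comm T S] at e2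
  omega
end

section
/- Let n ≥ 2 and let R_UV be the quotient of (ℤ/2ℤ)[U_1,…,U_n,V_1,…,V_n] by the ideal generated by U_iV_i − U_jV_j for all i, j. Let I ⊆ {1,…,n} be a subset with |I| = m ≥ 2. For any n-tuple S = ((a_1,b_1),…,(a_n,b_n)) of pairs of nonnegative integers, the determinant Δ_S = det( (U_i^{a_j} V_i^{b_j})_{1≤i,j≤n} ) ∈ R_UV lies in the ideal 𝒥_I of R_UV generated by all m×m determinants det( (U_i^{c_l} V_i^{d_l}) ) with rows indexed by i ∈ I and columns indexed by l ∈ {1,…,m}, over all m-tuples ((c_1,d_1),…,(c_m,d_m)) of pairs of nonnegative integers. In particular, the ideal 𝒥 generated by all Δ_S is contained in 𝒥_I. -/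
open MvPolynomial

private lemma key_lemma {R : Type*} [CommRing R] {n : ℕ} (U V : Fin n → R)
    (I : Finset (Fin n)) (JI : Ideal R)
    (hgen : ∀ T : {i // i ∈ I} → ℕ × ℕ,
      Matrix.det (Matrix.of fun p q : {i // i ∈ I} =>
        U (p : Fin n) ^ (T q).1 * V (p : Fin n) ^ (T q).2) ∈ JI) :
    ∀ (k : ℕ) (J : Finset (Fin n)), I ⊆ J → J.card = I.card + k →
      ∀ S : {i // i ∈ J} → ℕ × ℕ,
        Matrix.det (Matrix.of fun p q : {i // i ∈ J} =>
          U (p : Fin n) ^ (S q).1 * V (p : Fin n) ^ (S q).2) ∈ JI := by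
  intro k
  induction k with
  | zero =>
    intro J hIJ hcard S
    have hJI : I = J := Finset.eq_of_subset_of_card_le hIJ (by omega)
    subst hJI
    exact hgen S
  | succ k ih =>
    intro J hIJ hcard S
    obtain ⟨i, hiJ, hiI⟩ : ∃ i ∈ J, i ∉ I := by
      have : ¬ J ⊆ I := fun h => by
        have := Finset.card_le_card h; omega
      exact Finset.not_subset.mp this
    have e : {x // x ∈ J} ≃ Fin (I.card + k + 1) :=
      J.equivFin.trans (finCongr (by omega))
    set M : Matrix {x // x ∈ J} {x // x ∈ J} R :=
      Matrix.of fun p q : {x // x ∈ J} =>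
        U (p : Fin n) ^ (S q).1 * V (p : Fin n) ^ (S q).2 with hM
    set r : Fin (I.card + k + 1) := e ⟨i, hiJ⟩ with hr
    have hdet : M.det = (M.submatrix e.symm e.symm).det :=
      (Matrix.det_submatrix_equiv_self e.symm M).symm
    rw [hdet, Matrix.det_succ_row _ r]
    apply Ideal.sum_mem
    intro j _
    apply Ideal.mul_mem_left
    -- build the smaller matrix indexed by J.erase i
    set J' := J.erase i with hJ'
    have hiJ' : I ⊆ J' := Finset.subset_erase.mpr ⟨hIJ, hiI⟩
    have hcard' : J'.card = I.card + k := by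
      rw [hJ', Finset.card_erase_of_mem hiJ]; omega
    have hval : ∀ l : Fin (I.card + k), ((e.symm (r.succAbove l) : {x // x ∈ J}) : Fin n) ∈ J' := by
      intro l
      rw [hJ', Finset.mem_erase]
      refine ⟨?_, (e.symm (r.succAbove l)).2⟩
      intro hv
      have : e.symm (r.succAbove l) = ⟨i, hiJ⟩ := Subtype.ext hv
      have : r.succAbove l = r := by
        have := congrArg e this
        simpa [hr] using this
      exact Fin.succAbove_ne r l this
    set f : Fin (I.card + k) → {x // x ∈ J'} :=
      fun l => ⟨((e.symm (r.succAbove l) : {x // x ∈ J}) : Fin n), hval l⟩ with hf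
    have hfinj : Function.Injective f := by
      intro a b hab
      have hv : (f a).1 = (f b).1 := congrArg Subtype.val hab
      exact r.succAbove_right_injective (e.symm.injective (Subtype.ext hv))
    have hfbij : Function.Bijective f := by
      refine (Fintype.bijective_iff_injective_and_card f).mpr ⟨hfinj, ?_⟩
      simp [Fintype.card_coe, hcard']
    set ef : Fin (I.card + k) ≃ {x // x ∈ J'} := Equiv.ofBijective f hfbij with hef
    set S'' : {x // x ∈ J'} → ℕ × ℕ :=
      fun q => S (e.symm (j.succAbove (ef.symm q))) with hS''
    have hsub : (M.submatrix e.symm e.symm).submatrix r.succAbove j.succAbove =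
        (Matrix.of fun p q : {x // x ∈ J'} =>
          U (p : Fin n) ^ (S'' q).1 * V (p : Fin n) ^ (S'' q).2).submatrix ef ef := by
      ext l l'
      have h1 : (ef l : {x // x ∈ J'}) = f l := rfl
      simp only [Matrix.submatrix_apply, hM, Matrix.of_apply, h1, hS'',
        Equiv.symm_apply_apply, hf]
    rw [hsub, Matrix.det_submatrix_equiv_self]
    exact ih J' hiJ' hcard' S''

/-- In `R_UV = (ℤ/2)[U_1,…,U_n,V_1,…,V_n]/(U_iV_i − U_jV_j)`, for any
subset `I ⊆ {1,…,n}` with `|I| = m ≥ 2`, every determinant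
`Δ_S = det(U_i^{a_j} V_i^{b_j})` lies in the ideal `𝒥_I` generated by all `m×m`
determinants with rows indexed by `I` and exponent pairs `(c_l, d_l)`.  In particular
the ideal `𝒥` generated by all `Δ_S` is contained in `𝒥_I`. -/
theorem ideal_J_subset_sublink_ideal (n : ℕ) (hn : 2 ≤ n) (I : Finset (Fin n))
    (hI : 2 ≤ I.card) :
    let I0 : Ideal (MvPolynomial (Fin n ⊕ Fin n) (ZMod 2)) := Ideal.span
      {f | ∃ i j : Fin n,
        f = X (Sum.inl i) * X (Sum.inr i) - X (Sum.inl j) * X (Sum.inr j)}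
    let U : Fin n → MvPolynomial (Fin n ⊕ Fin n) (ZMod 2) ⧸ I0 :=
      fun i => Ideal.Quotient.mk I0 (X (Sum.inl i))
    let V : Fin n → MvPolynomial (Fin n ⊕ Fin n) (ZMod 2) ⧸ I0 :=
      fun i => Ideal.Quotient.mk I0 (X (Sum.inr i))
    let Δ : (Fin n → ℕ × ℕ) → MvPolynomial (Fin n ⊕ Fin n) (ZMod 2) ⧸ I0 := fun S =>
      Matrix.det (Matrix.of fun i j : Fin n => U i ^ (S j).1 * V i ^ (S j).2)
    let JI : Ideal (MvPolynomial (Fin n ⊕ Fin n) (ZMod 2) ⧸ I0) := Ideal.span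
      {x | ∃ T : {i // i ∈ I} → ℕ × ℕ,
        x = Matrix.det (Matrix.of fun p q : {i // i ∈ I} =>
          U (p : Fin n) ^ (T q).1 * V (p : Fin n) ^ (T q).2)}
    (∀ S : Fin n → ℕ × ℕ, Δ S ∈ JI) ∧ Ideal.span (Set.range Δ) ≤ JI := by
  intro I0 U V Δ JI
  have hgen : ∀ T : {i // i ∈ I} → ℕ × ℕ,
      Matrix.det (Matrix.of fun p q : {i // i ∈ I} =>
        U (p : Fin n) ^ (T q).1 * V (p : Fin n) ^ (T q).2) ∈ JI :=
    fun T => Ideal.subset_span ⟨T, rfl⟩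
  have hkey := key_lemma U V I JI hgen
  have hmain : ∀ S : Fin n → ℕ × ℕ, Δ S ∈ JI := by
    intro S
    have hcard : (Finset.univ : Finset (Fin n)).card = I.card + (n - I.card) := by
      have := Finset.card_le_univ I
      simp only [Finset.card_univ, Fintype.card_fin] at *
      omega
    have h := hkey (n - I.card) Finset.univ (Finset.subset_univ I) hcard
      (fun q => S (q : Fin n))
    have heq : Δ S = Matrix.det (Matrix.of fun p q : {x // x ∈ (Finset.univ : Finset (Fin n))} =>
        U (p : Fin n) ^ (S (q : Fin n)).1 * V (p : Fin n) ^ (S (q : Fin n)).2) := by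
      rw [show Δ S = Matrix.det ((Matrix.of fun i j : Fin n =>
        U i ^ (S j).1 * V i ^ (S j).2).submatrix
          (Equiv.subtypeUnivEquiv (fun x => Finset.mem_univ x))
          (Equiv.subtypeUnivEquiv (fun x => Finset.mem_univ x))) from
        (Matrix.det_submatrix_equiv_self _ _).symm]
      rfl
    rw [heq]
    exact h
  refine ⟨hmain, ?_⟩
  rw [Ideal.span_le]
  rintro x ⟨S, rfl⟩
  exact hmain S
end

section
/- Let R be a commutative ring and let u_1, u_2, v_1, v_2, t ∈ R satisfy u_1 v_1 = t and u_2 v_2 = t. For k ≥ 0 define C'_k := Σ_{i=0}^{k−1} (v_1 v_2)^i (u_1 u_2)^{k−1−i} (so C'_0 = 0). Then for every k ≥ 0: v_2 (v_1 v_2)^k − u_1 (u_1 u_2)^k = (v_2 − u_1) · ( C'_{k+1} + t · C'_k ). -/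
lemma aux_geom {R : Type*} [CommRing R] (x y : R) (n : ℕ) :
    (∑ i ∈ Finset.range (n + 1), x ^ i * y ^ (n - i)) =
      x ^ n + y * ∑ i ∈ Finset.range n, x ^ i * y ^ (n - 1 - i) := by
  rw [Finset.sum_range_succ, Finset.mul_sum]
  rw [Nat.sub_self, pow_zero, mul_one, add_comm]
  congr 1
  refine Finset.sum_congr rfl fun i hi => ?_
  have hi' := Finset.mem_range.mp hi
  have : n - i = (n - 1 - i) + 1 := by omega
  rw [this, pow_succ]
  ring

/-- Let `R` be a commutative ring with `u_1 v_1 = u_2 v_2 = t`, and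
`C'_k = Σ_{i=0}^{k−1} (v_1 v_2)^i (u_1 u_2)^{k−1−i}`.  Then for every `k ≥ 0`:
`v_2 (v_1 v_2)^k − u_1 (u_1 u_2)^k = (v_2 − u_1)(C'_{k+1} + t C'_k)`. -/
theorem hopf_link_series_identity {R : Type*} [CommRing R]
    (u1 u2 v1 v2 t : R) (h1 : u1 * v1 = t) (h2 : u2 * v2 = t) (k : ℕ) :
    v2 * (v1 * v2) ^ k - u1 * (u1 * u2) ^ k =
      (v2 - u1) *
        ((∑ i ∈ Finset.range (k + 1), (v1 * v2) ^ i * (u1 * u2) ^ (k - i)) +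
          t * ∑ i ∈ Finset.range k, (v1 * v2) ^ i * (u1 * u2) ^ (k - 1 - i)) := by
  induction k with
  | zero => simp
  | succ k ih =>
    rw [aux_geom (v1*v2) (u1*u2) (k+1)]
    simp only [Nat.add_sub_cancel]
    rw [aux_geom (v1*v2) (u1*u2) k] at *
    linear_combination (u1*u2) * ih + (v1*v2)^k * v2 * h1 - (v1*v2)^k * u1 * h2
end
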